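/- arXiv:1210.7844 — 8 statements merged into one kernel-verified Lean document; each statement's English description precedes it below -/
import Mathlib

section
/- Let c ≥ 2 be an integer, let A ∈ ℂ^{n×n} be a Hermitian matrix that is colorable with c colors, and let B ∈ ℂ^{n×n} be an arbitrary real diagonal matrix. Then λ_max(B − A) ≥ λ_max(B + (1/(c−1))·A). -/
/-!
Let `ζ` be a primitive `c`-th root of unity and `D_s = diag (ζ ^ (s * f k))`, where `f` is the
colouring. Conjugation by the unitary `D_s` fixes every diagonal matrix, while
`∑_{s < c} D_sᴴ A D_s = 0`: its `(k, l)` entry is `A k l * ∑_s (conj ζ^(f k) * ζ^(f l)) ^ s`,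
and either `f k = f l` and `A k l = 0`, or the geometric sum vanishes. Hence
`∑_{0 < s < c} D_sᴴ (B - A) D_s = (c - 1) B + A`. If `B - A ≤ λ I` in the Loewner order, each
summand is `≤ λ I`, so `B + A / (c - 1) ≤ λ I`; with `λ = λ_max (B - A)` this is the claim.
-/

open Matrix Finset
open scoped MatrixOrder ComplexOrder

theorem geom_sum_eq_zero_of_pow_eq_one {K : Type*} [Field K] {w : K} {c : ℕ} (hw : w ^ c = 1)
    (hw1 : w ≠ 1) : ∑ s ∈ range c, w ^ s = 0 := by
  rw [geom_sum_eq hw1, hw, sub_self, zero_div]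

namespace IsPrimitiveRoot

variable {ζ : ℂ} {c : ℕ}

theorem star_pow_mul_pow_self (hζ : IsPrimitiveRoot ζ c) (hc : c ≠ 0) (a : ℕ) :
    star (ζ ^ a) * ζ ^ a = 1 := by
  rw [Complex.star_def, Complex.conj_mul', norm_pow, hζ.norm'_eq_one hc]
  simp

theorem star_pow_mul_pow_ne_one (hζ : IsPrimitiveRoot ζ c) {a b : Fin c} (hab : a ≠ b) :
    star (ζ ^ (a : ℕ)) * ζ ^ (b : ℕ) ≠ 1 := by
  have hc : c ≠ 0 := by rintro rfl; exact a.elim0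
  have hinv := hζ.star_pow_mul_pow_self hc a
  rw [← hinv]
  intro h
  exact hab (Fin.ext (hζ.pow_inj a.isLt b.isLt
    (mul_left_cancel₀ (left_ne_zero_of_mul_eq_one hinv) h).symm))

theorem sum_range_star_pow_mul_pow_pow_eq_zero (hζ : IsPrimitiveRoot ζ c) {a b : Fin c}
    (hab : a ≠ b) : ∑ s ∈ range c, (star (ζ ^ (a : ℕ)) * ζ ^ (b : ℕ)) ^ s = 0 := by
  refine geom_sum_eq_zero_of_pow_eq_one ?_ (hζ.star_pow_mul_pow_ne_one hab)
  rw [mul_pow, ← star_pow, ← pow_mul, ← pow_mul, mul_comm (a : ℕ), mul_comm (b : ℕ), pow_mul,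
    pow_mul, hζ.pow_eq_one]
  simp

end IsPrimitiveRoot

section ColorPhase

variable {n : Type*} [DecidableEq n] {c : ℕ}

def colorPhase (ζ : ℂ) (f : n → Fin c) (s : ℕ) : Matrix n n ℂ :=
  diagonal fun k => (ζ ^ (f k : ℕ)) ^ s

theorem colorPhase_zero (ζ : ℂ) (f : n → Fin c) : colorPhase ζ f 0 = 1 := by
  simp [colorPhase]

variable [Fintype n]

theorem star_colorPhase_mul_mul_colorPhase_apply (ζ : ℂ) (f : n → Fin c) (s : ℕ)
    (A : Matrix n n ℂ) (k l : n) :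
    (star (colorPhase ζ f s) * A * colorPhase ζ f s) k l
      = (star (ζ ^ (f k : ℕ)) * ζ ^ (f l : ℕ)) ^ s * A k l := by
  simp only [colorPhase, star_eq_conjTranspose, diagonal_conjTranspose, mul_diagonal,
    diagonal_mul, Pi.star_apply, star_pow]
  ring

theorem star_colorPhase_mul_diagonal_mul_colorPhase {ζ : ℂ} (hζ : IsPrimitiveRoot ζ c)
    (f : n → Fin c) (s : ℕ) (d : n → ℂ) :
    star (colorPhase ζ f s) * diagonal d * colorPhase ζ f s = diagonal d := by
  ext k l
  rw [star_colorPhase_mul_mul_colorPhase_apply]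
  obtain rfl | hkl := eq_or_ne k l
  · rw [hζ.star_pow_mul_pow_self (Fin.pos (f k)).ne' _, one_pow, one_mul]
  · simp [hkl]

theorem sum_star_colorPhase_mul_mul_colorPhase_eq_zero {ζ : ℂ} (hζ : IsPrimitiveRoot ζ c)
    {f : n → Fin c} {A : Matrix n n ℂ} (hf : ∀ k l, f k = f l → A k l = 0) :
    ∑ s ∈ range c, star (colorPhase ζ f s) * A * colorPhase ζ f s = 0 := by
  ext k l
  simp only [Matrix.sum_apply, star_colorPhase_mul_mul_colorPhase_apply, ← sum_mul,
    Matrix.zero_apply]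
  by_cases hkl : f k = f l
  · rw [hf k l hkl, mul_zero]
  · rw [hζ.sum_range_star_pow_mul_pow_pow_eq_zero hkl, zero_mul]

end ColorPhase

theorem sum_erase_zero_star_colorPhase_mul_mul_colorPhase {n : Type*} [Fintype n] [DecidableEq n]
    {c : ℕ} (hc : 0 < c) {ζ : ℂ} (hζ : IsPrimitiveRoot ζ c) {f : n → Fin c} {A : Matrix n n ℂ}
    (hf : ∀ k l, f k = f l → A k l = 0) (d : n → ℂ) :
    ∑ s ∈ (range c).erase 0, star (colorPhase ζ f s) * (diagonal d - A) * colorPhase ζ f s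
      = (c - 1) • diagonal d + A := by
  rw [sum_erase_eq_sub (mem_range.2 hc)]
  simp only [mul_sub, sub_mul, sum_sub_distrib, star_colorPhase_mul_diagonal_mul_colorPhase hζ,
    sum_star_colorPhase_mul_mul_colorPhase_eq_zero hζ hf, sum_const, card_range, colorPhase_zero,
    star_one, one_mul, mul_one]
  obtain ⟨k, rfl⟩ := Nat.exists_eq_add_of_lt hc
  simp only [zero_add, add_tsub_cancel_right, succ_nsmul]
  abel

theorem Matrix.IsHermitian.le_algebraMap_iff_eigenvalues_le {n 𝕜 : Type*} [Fintype n]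
    [DecidableEq n] [RCLike 𝕜] {M : Matrix n n 𝕜} (hM : M.IsHermitian) {r : ℝ} :
    M ≤ algebraMap ℝ (Matrix n n 𝕜) r ↔ ∀ i, hM.eigenvalues i ≤ r := by
  rw [le_algebraMap_iff_spectrum_le hM.isSelfAdjoint, hM.spectrum_real_eq_range_eigenvalues]
  simp

theorem Antitone.apply_le_of_eq_comp_perm {ι α : Type*} [Preorder ι] [Preorder α] {μ g : ι → α}
    (hμ : Antitone μ) {e : Equiv.Perm ι} (he : μ = g ∘ e) {i₀ : ι} (hi₀ : ∀ j, i₀ ≤ j) (i : ι) :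
    g i ≤ μ i₀ := by
  simpa [he] using hμ (hi₀ (e.symm i))

theorem diagonal_add_inv_smul_le_algebraMap_of_sub_le {n : Type*} [Fintype n] [DecidableEq n]
    {c : ℕ} (hc : 2 ≤ c) {f : n → Fin c} {A : Matrix n n ℂ} (hf : ∀ k l, f k = f l → A k l = 0)
    {d : n → ℂ} {r : ℝ} (h : diagonal d - A ≤ algebraMap ℝ (Matrix n n ℂ) r) :
    diagonal d + ((c : ℂ) - 1)⁻¹ • A ≤ algebraMap ℝ (Matrix n n ℂ) r := by
  obtain ⟨ζ, hζ⟩ : ∃ ζ : ℂ, IsPrimitiveRoot ζ c := ⟨_, Complex.isPrimitiveRoot_exp c (by omega)⟩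
  have hc' : (1 : ℝ) < c := by exact_mod_cast hc
  have hsum : (c - 1) • diagonal d + A ≤ (c - 1) • algebraMap ℝ (Matrix n n ℂ) r :=
    calc (c - 1) • diagonal d + A
        = ∑ s ∈ (range c).erase 0,
            star (colorPhase ζ f s) * (diagonal d - A) * colorPhase ζ f s :=
          (sum_erase_zero_star_colorPhase_mul_mul_colorPhase (by omega) hζ hf d).symm
      _ ≤ ∑ s ∈ (range c).erase 0, algebraMap ℝ (Matrix n n ℂ) r := sum_le_sum fun s _ => by
          simpa only [algebraMap_eq_diagonal, star_colorPhase_mul_diagonal_mul_colorPhase hζ] using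
            star_left_conjugate_le_conjugate h (colorPhase ζ f s)
      _ = (c - 1) • algebraMap ℝ (Matrix n n ℂ) r := by
          rw [sum_const, card_erase_of_mem (mem_range.2 (by omega)), card_range]
  have hscale (Y : Matrix n n ℂ) : ((c : ℝ) - 1)⁻¹ • (c - 1) • Y = Y := by
    rw [← Nat.cast_smul_eq_nsmul ℝ, smul_smul, Nat.cast_sub (by omega), Nat.cast_one,
      inv_mul_cancel₀ (by linarith), one_smul]
  calc diagonal d + ((c : ℂ) - 1)⁻¹ • A = ((c : ℝ) - 1)⁻¹ • ((c - 1) • diagonal d + A) := by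
        rw [smul_add, hscale, ← Complex.coe_smul]
        push_cast
        rfl
    _ ≤ ((c : ℝ) - 1)⁻¹ • (c - 1) • algebraMap ℝ (Matrix n n ℂ) r :=
        _root_.smul_le_smul_of_nonneg_left hsum (inv_nonneg.2 (by linarith))
    _ = algebraMap ℝ (Matrix n n ℂ) r := hscale _

theorem stmt_0_general {n : ℕ} (hn : 0 < n) (c : ℕ) (hc : 2 ≤ c)
    (A B : Matrix (Fin n) (Fin n) ℂ)
    (f : Fin n → Fin c) (hf : ∀ k l : Fin n, f k = f l → A k l = 0)
    (b : Fin n → ℝ) (hB : B = Matrix.diagonal fun i => (b i : ℂ))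
    (hBmA : (B - A).IsHermitian)
    (hBpA : (B + ((c : ℂ) - 1)⁻¹ • A).IsHermitian)
    (μ ν : Fin n → ℝ)
    (hμa : Antitone μ) (hμ : ∃ e : Equiv.Perm (Fin n), μ = hBmA.eigenvalues ∘ e)
    (hν : ∃ e : Equiv.Perm (Fin n), ν = hBpA.eigenvalues ∘ e) :
    μ ⟨0, hn⟩ ≥ ν ⟨0, hn⟩ := by
  obtain ⟨e, he⟩ := hμ
  obtain ⟨e', rfl⟩ := hν
  subst hB
  have hBmA_le := hBmA.le_algebraMap_iff_eigenvalues_le.2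
    (hμa.apply_le_of_eq_comp_perm (i₀ := ⟨0, hn⟩) he fun j => Nat.zero_le j)
  exact hBpA.le_algebraMap_iff_eigenvalues_le.1
    (diagonal_add_inv_smul_le_algebraMap_of_sub_le hc hf hBmA_le) _

/-- **Nikiforov's theorem.** If the Hermitian matrix `A` is colorable with `c ≥ 2` colors
and `B` is a real diagonal matrix, then `λ_max (B - A) ≥ λ_max (B + (1/(c-1)) • A)`.
Here `μ` (resp. `ν`) is the non-increasing enumeration of the eigenvalues of `B - A`
(resp. `B + (1/(c-1)) • A`), so that the maximum eigenvalue is the value at index `0`. -/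
theorem stmt_0 {n : ℕ} (hn : 0 < n) (c : ℕ) (hc : 2 ≤ c)
    (A B : Matrix (Fin n) (Fin n) ℂ) (hA : A.IsHermitian)
    (f : Fin n → Fin c) (hf : ∀ k l : Fin n, f k = f l → A k l = 0)
    (b : Fin n → ℝ) (hB : B = Matrix.diagonal fun i => (b i : ℂ))
    (hBmA : (B - A).IsHermitian)
    (hBpA : (B + ((c : ℂ) - 1)⁻¹ • A).IsHermitian)
    (μ ν : Fin n → ℝ)
    (hμa : Antitone μ) (hμ : ∃ e : Equiv.Perm (Fin n), μ = hBmA.eigenvalues ∘ e)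
    (hνa : Antitone ν) (hν : ∃ e : Equiv.Perm (Fin n), ν = hBpA.eigenvalues ∘ e) :
    μ ⟨0, hn⟩ ≥ ν ⟨0, hn⟩ :=
  stmt_0_general hn c hc A B f hf b hB hBmA hBpA μ ν hμa hμ hν
end

section
/- Let c ≥ 2 be an integer, let A ∈ ℂ^{n×n} be a Hermitian matrix that is colorable with c colors, and let B ∈ ℂ^{n×n} be an arbitrary real diagonal matrix. Then λ_max(B − A) ≥ λ_max(B + A) − ((c−2)/(c−1))·λ_max(A). -/
/-!
Let `x` be a unit eigenvector of `B + A` for `ν₀` and twist it by each character `ψ` of the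
colour group `Fin c`: `y_ψ v = ψ (f v) · x v`. The twists have the same norm and the same value
`⟪y_ψ, B y_ψ⟫ = ⟪x, B x⟫` because `B` is diagonal, while by orthogonality of characters the sum of
`⟪y_ψ, A y_ψ⟫` over all `ψ` only sees the entries `A u v` with `f u = f v`, which vanish. Bounding
the `c - 1` nontrivial twists by `μ₀` gives `(c - 1) ⟪x, B x⟫ + ⟪x, A x⟫ ≤ (c - 1) μ₀`; with
`⟪x, B x⟫ = ν₀ - ⟪x, A x⟫` and `⟪x, A x⟫ ≤ α₀` this is the claim.
-/

open Matrix

section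

variable {ι : Type*} [Fintype ι]

theorem Matrix.IsHermitian.re_star_dotProduct_mulVec_le {𝕜 : Type*} [RCLike 𝕜] [DecidableEq ι]
    {M : Matrix ι ι 𝕜} (hM : M.IsHermitian) {m : ℝ} (hm : ∀ i, hM.eigenvalues i ≤ m)
    (y : ι → 𝕜) : RCLike.re (star y ⬝ᵥ M *ᵥ y) ≤ m * RCLike.re (star y ⬝ᵥ y) := by
  set U : Matrix ι ι 𝕜 := (hM.eigenvectorUnitary : Matrix ι ι 𝕜)
  have hUU : U * Uᴴ = 1 := mem_unitaryGroup_iff.mp hM.eigenvectorUnitary.2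
  set z := Uᴴ *ᵥ y
  have hz : star z = star y ᵥ* U := by rw [star_mulVec, conjTranspose_conjTranspose]
  have hzz : star z ⬝ᵥ z = star y ⬝ᵥ y := by
    rw [hz, ← dotProduct_mulVec, mulVec_mulVec, hUU, one_mulVec]
  have hzMz : star z ⬝ᵥ diagonal (RCLike.ofReal ∘ hM.eigenvalues) *ᵥ z = star y ⬝ᵥ M *ᵥ y := by
    conv_rhs => rw [hM.spectral_theorem]
    rw [hz, ← dotProduct_mulVec, mulVec_mulVec, mulVec_mulVec]
    rfl
  rw [← hzMz, ← hzz]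
  simp only [dotProduct, mulVec_diagonal, map_sum, Finset.mul_sum]
  refine Finset.sum_le_sum fun i _ => ?_
  have hterm : star (z i) * ((hM.eigenvalues i : 𝕜) * z i)
      = ((hM.eigenvalues i * ‖z i‖ ^ 2 : ℝ) : 𝕜) := by
    rw [RCLike.star_def, mul_left_comm, RCLike.conj_mul]; push_cast; rfl
  simp only [Pi.star_apply, Function.comp_apply]
  rw [hterm, RCLike.star_def, RCLike.conj_mul, ← RCLike.ofReal_pow, RCLike.ofReal_re,
    RCLike.ofReal_re]
  exact mul_le_mul_of_nonneg_right (hm i) (sq_nonneg _)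

theorem star_mul_dotProduct_mul_of_star_mul_self {R : Type*} [CommRing R] [StarRing R]
    {θ : ι → R} (hθ : ∀ i, star (θ i) * θ i = 1) (x y : ι → R) :
    star (θ * x) ⬝ᵥ (θ * y) = star x ⬝ᵥ y := by
  refine Finset.sum_congr rfl fun i _ => ?_
  simp only [Pi.star_apply, Pi.mul_apply, star_mul']
  linear_combination (star (x i) * y i) * hθ i

theorem diagonal_mulVec_mul {R : Type*} [CommRing R] [DecidableEq ι] (d θ x : ι → R) :
    diagonal d *ᵥ (θ * x) = θ * (diagonal d *ᵥ x) := by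
  ext i
  simp only [mulVec_diagonal, Pi.mul_apply]
  ring

theorem star_mul_dotProduct_mulVec_mul {R : Type*} [CommRing R] [StarRing R]
    (M : Matrix ι ι R) (θ x : ι → R) :
    star (θ * x) ⬝ᵥ M *ᵥ (θ * x)
      = ∑ u, ∑ v, star (θ u) * θ v * (star (x u) * M u v * x v) := by
  simp only [dotProduct, mulVec, Finset.mul_sum, Pi.star_apply, Pi.mul_apply, star_mul']
  refine Finset.sum_congr rfl fun u _ => Finset.sum_congr rfl fun v _ => ?_
  ring

end

theorem AddChar.star_apply_mul_apply {G : Type*} [AddCommGroup G] [Finite G]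
    (ψ : AddChar G ℂ) (a b : G) : star (ψ a) * ψ b = ψ (b - a) := by
  rw [Complex.star_def, ← AddChar.map_neg_eq_conj, ← AddChar.map_add_eq_mul, neg_add_eq_sub]

theorem AddChar.sum_star_apply_mul_apply {G : Type*} [AddCommGroup G] [Fintype G]
    [DecidableEq G] (a b : G) :
    ∑ ψ : AddChar G ℂ, star (ψ a) * ψ b = if a = b then (Fintype.card G : ℂ) else 0 := by
  simp_rw [AddChar.star_apply_mul_apply, AddChar.sum_apply_eq_ite, sub_eq_zero, eq_comm]

section Colorable

variable {ι G : Type*} [Fintype ι] [AddCommGroup G] [Fintype G]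

theorem sum_addChar_star_mul_dotProduct_mulVec_mul_eq_zero (f : ι → G) {M : Matrix ι ι ℂ}
    (hM : ∀ u v, f u = f v → M u v = 0) (x : ι → ℂ) :
    ∑ ψ : AddChar G ℂ, star (ψ ∘ f * x) ⬝ᵥ M *ᵥ (ψ ∘ f * x) = 0 := by
  classical
  simp only [star_mul_dotProduct_mulVec_mul, Function.comp_apply]
  rw [Finset.sum_comm]
  refine Finset.sum_eq_zero fun u _ => ?_
  rw [Finset.sum_comm]
  refine Finset.sum_eq_zero fun v _ => ?_
  rw [← Finset.sum_mul, AddChar.sum_star_apply_mul_apply]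
  split_ifs with h
  · rw [hM u v h, mul_zero, zero_mul, mul_zero]
  · exact zero_mul _

theorem card_sub_one_mul_re_diagonal_add_re_le [DecidableEq ι] (f : ι → G) {A : Matrix ι ι ℂ}
    (hA : ∀ u v, f u = f v → A u v = 0) (d : ι → ℂ) {m : ℝ}
    (hm : ∀ y, (star y ⬝ᵥ (diagonal d - A) *ᵥ y).re ≤ m * (star y ⬝ᵥ y).re) (x : ι → ℂ) :
    (Fintype.card G - 1) * (star x ⬝ᵥ diagonal d *ᵥ x).re + (star x ⬝ᵥ A *ᵥ x).re
      ≤ (Fintype.card G - 1) * m * (star x ⬝ᵥ x).re := by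
  classical
  set y : AddChar G ℂ → ι → ℂ := fun ψ => ψ ∘ f * x
  have hunit (ψ : AddChar G ℂ) (v : ι) : star ((ψ ∘ f) v) * (ψ ∘ f) v = 1 := by
    rw [Function.comp_apply, AddChar.star_apply_mul_apply, sub_self, AddChar.map_zero_eq_one]
  have hnorm (ψ : AddChar G ℂ) : star (y ψ) ⬝ᵥ y ψ = star x ⬝ᵥ x :=
    star_mul_dotProduct_mul_of_star_mul_self (hunit ψ) x x
  have htwist (ψ : AddChar G ℂ) : (star (y ψ) ⬝ᵥ (diagonal d - A) *ᵥ y ψ).re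
      = (star x ⬝ᵥ diagonal d *ᵥ x).re - (star (y ψ) ⬝ᵥ A *ᵥ y ψ).re := by
    rw [sub_mulVec, dotProduct_sub, diagonal_mulVec_mul,
      star_mul_dotProduct_mul_of_star_mul_self (hunit ψ), Complex.sub_re]
  have hA₀ : ∑ ψ, star (y ψ) ⬝ᵥ A *ᵥ y ψ = 0 :=
    sum_addChar_star_mul_dotProduct_mulVec_mul_eq_zero f hA x
  have htotal : ∑ ψ, (star (y ψ) ⬝ᵥ (diagonal d - A) *ᵥ y ψ).re
      = Fintype.card G * (star x ⬝ᵥ diagonal d *ᵥ x).re := by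
    rw [Finset.sum_congr rfl fun ψ _ => htwist ψ, Finset.sum_sub_distrib, Finset.sum_const,
      Finset.card_univ, AddChar.card_eq, nsmul_eq_mul, ← Complex.re_sum, hA₀, Complex.zero_re,
      sub_zero]
  have hrest : ∑ ψ ∈ {1}ᶜ, (star (y ψ) ⬝ᵥ (diagonal d - A) *ᵥ y ψ).re
      ≤ (Fintype.card G - 1) * m * (star x ⬝ᵥ x).re := by
    calc ∑ ψ ∈ {1}ᶜ, (star (y ψ) ⬝ᵥ (diagonal d - A) *ᵥ y ψ).re
        ≤ ∑ _ψ ∈ ({1}ᶜ : Finset (AddChar G ℂ)), m * (star x ⬝ᵥ x).re :=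
          Finset.sum_le_sum fun ψ _ => hnorm ψ ▸ hm (y ψ)
      _ = (Fintype.card G - 1) * m * (star x ⬝ᵥ x).re := by
          rw [Finset.sum_const, Finset.card_compl, AddChar.card_eq, Finset.card_singleton,
            nsmul_eq_mul, Nat.cast_sub Fintype.card_pos, Nat.cast_one, mul_assoc]
  have hy₁ : y 1 = x := by
    ext v
    simp [y]
  rw [Fintype.sum_eq_add_sum_compl 1, htwist, hy₁] at htotal
  linarith

theorem Matrix.IsHermitian.eigenvalues_le_of_colorable [DecidableEq ι] (f : ι → G)
    {A : Matrix ι ι ℂ} (hf : ∀ u v, f u = f v → A u v = 0) {d : ι → ℂ}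
    (hDpA : (diagonal d + A).IsHermitian) (hDmA : (diagonal d - A).IsHermitian)
    (hA : A.IsHermitian) (hG : 1 < Fintype.card G) {m a : ℝ} (hm : ∀ i, hDmA.eigenvalues i ≤ m)
    (ha : ∀ i, hA.eigenvalues i ≤ a) (i : ι) :
    hDpA.eigenvalues i ≤ m + (Fintype.card G - 2) / (Fintype.card G - 1) * a := by
  set x := ⇑(hDpA.eigenvectorBasis i)
  have hx : star x ⬝ᵥ x = 1 := by
    rw [dotProduct_comm, ← EuclideanSpace.inner_eq_star_dotProduct,
      inner_self_eq_one_of_norm_eq_one (hDpA.eigenvectorBasis.orthonormal.1 i)]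
  have hev : hDpA.eigenvalues i = (star x ⬝ᵥ diagonal d *ᵥ x).re + (star x ⬝ᵥ A *ᵥ x).re := by
    rw [hDpA.eigenvalues_eq, add_mulVec, dotProduct_add]
    rfl
  have hxAx : (star x ⬝ᵥ A *ᵥ x).re ≤ a := by
    simpa [hx] using hA.re_star_dotProduct_mulVec_le ha x
  have hkey := card_sub_one_mul_re_diagonal_add_re_le f hf d
    (hDmA.re_star_dotProduct_mulVec_le hm) x
  rw [hx, Complex.one_re, mul_one] at hkey
  have hG₂ : (2 : ℝ) ≤ Fintype.card G := by exact_mod_cast hG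
  have hgap : hDpA.eigenvalues i - m
      ≤ (Fintype.card G - 2) / (Fintype.card G - 1) * (star x ⬝ᵥ A *ᵥ x).re := by
    rw [div_mul_eq_mul_div, le_div_iff₀ (by linarith), hev]
    linear_combination hkey
  have hscale : (Fintype.card G - 2) / (Fintype.card G - 1) * (star x ⬝ᵥ A *ᵥ x).re
      ≤ (Fintype.card G - 2) / (Fintype.card G - 1) * a :=
    mul_le_mul_of_nonneg_left hxAx (div_nonneg (by linarith) (by linarith))
  linarith

end Colorable

theorem apply_le_apply_zero_of_antitone_of_eq_comp {n : ℕ} (hn : 0 < n) {β : Type*} [Preorder β]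
    {μ g : Fin n → β} (hμ : Antitone μ) {e : Equiv.Perm (Fin n)} (he : μ = g ∘ e) (j : Fin n) :
    g j ≤ μ ⟨0, hn⟩ := by
  simpa [he] using hμ (show (⟨0, hn⟩ : Fin n) ≤ e.symm j from Nat.zero_le _)

open Matrix in
theorem stmt_1_general {n : ℕ} (hn : 0 < n) (c : ℕ) (hc : 2 ≤ c)
    (A B : Matrix (Fin n) (Fin n) ℂ) (hA : A.IsHermitian)
    (f : Fin n → Fin c) (hf : ∀ k l : Fin n, f k = f l → A k l = 0)
    (b : Fin n → ℝ) (hB : B = Matrix.diagonal fun i => (b i : ℂ))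
    (hBmA : (B - A).IsHermitian) (hBpA : (B + A).IsHermitian)
    (μ ν α : Fin n → ℝ)
    (hμa : Antitone μ) (hμ : ∃ e : Equiv.Perm (Fin n), μ = hBmA.eigenvalues ∘ e)
    (hν : ∃ e : Equiv.Perm (Fin n), ν = hBpA.eigenvalues ∘ e)
    (hαa : Antitone α) (hα : ∃ e : Equiv.Perm (Fin n), α = hA.eigenvalues ∘ e) :
    μ ⟨0, hn⟩ ≥ ν ⟨0, hn⟩ - (((c : ℝ) - 2) / ((c : ℝ) - 1)) * α ⟨0, hn⟩ := by
  obtain ⟨eμ, hμe⟩ := hμ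
  obtain ⟨eν, rfl⟩ := hν
  obtain ⟨eα, hαe⟩ := hα
  have : NeZero c := ⟨by omega⟩
  subst hB
  have h := hBpA.eigenvalues_le_of_colorable f hf hBmA hA (by rwa [Fintype.card_fin])
    (apply_le_apply_zero_of_antitone_of_eq_comp hn hμa hμe)
    (apply_le_apply_zero_of_antitone_of_eq_comp hn hαa hαe) (eν ⟨0, hn⟩)
  rw [Fintype.card_fin] at h
  rw [ge_iff_le, Function.comp_apply]
  linarith

/-- If the Hermitian matrix `A` is colorable with `c ≥ 2` colors and `B` is a real diagonal
matrix, then `λ_max (B - A) ≥ λ_max (B + A) - ((c-2)/(c-1)) · λ_max A`.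
Here `μ`, `ν`, `α` are the non-increasing enumerations of the eigenvalues of
`B - A`, `B + A` and `A` respectively, so the maximum eigenvalue is the value at index `0`. -/
theorem stmt_1 {n : ℕ} (hn : 0 < n) (c : ℕ) (hc : 2 ≤ c)
    (A B : Matrix (Fin n) (Fin n) ℂ) (hA : A.IsHermitian)
    (f : Fin n → Fin c) (hf : ∀ k l : Fin n, f k = f l → A k l = 0)
    (b : Fin n → ℝ) (hB : B = Matrix.diagonal fun i => (b i : ℂ))
    (hBmA : (B - A).IsHermitian) (hBpA : (B + A).IsHermitian)
    (μ ν α : Fin n → ℝ)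
    (hμa : Antitone μ) (hμ : ∃ e : Equiv.Perm (Fin n), μ = hBmA.eigenvalues ∘ e)
    (hνa : Antitone ν) (hν : ∃ e : Equiv.Perm (Fin n), ν = hBpA.eigenvalues ∘ e)
    (hαa : Antitone α) (hα : ∃ e : Equiv.Perm (Fin n), α = hA.eigenvalues ∘ e) :
    μ ⟨0, hn⟩ ≥ ν ⟨0, hn⟩ - (((c : ℝ) - 2) / ((c : ℝ) - 1)) * α ⟨0, hn⟩ :=
  stmt_1_general hn c hc A B hA f hf b hB hBmA hBpA μ ν α hμa hμ hν hαa hα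
end

section
/- (Hoffman's bound.) Let G be a finite simple graph on n vertices with at least one edge and chromatic number χ. Then μ_n < 0 and μ_1 ≤ (χ − 1)·(−μ_n); equivalently, χ ≥ 1 + μ_1/(−μ_n). -/
/-!
Let `x` be an eigenvector for `μ₁`, fix a proper colouring with `k` colours, and let `yᵢ` be
the part of `x` supported on the `i`-th colour class. Since colour classes are independent,
`yᵢᵀ A yᵢ = 0`, and since the `yᵢ` add up to `x`, summing the Rayleigh bound
`μₙ ‖zᵢ‖² ≤ zᵢᵀ A zᵢ` over the vectors `zᵢ = k yᵢ - x` gives `μₙ (k² - k) ‖x‖² ≤ -k μ₁ ‖x‖²`.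
An edge `vw` gives `μₙ ≤ -1` through the test vector `e_v - e_w`.
-/

open Matrix Finset
open scoped MatrixOrder

theorem Matrix.IsHermitian.mul_dotProduct_self_le {V : Type*} [Fintype V] [DecidableEq V]
    {A : Matrix V V ℝ} (hA : A.IsHermitian) {lo : ℝ} (hlo : ∀ i, lo ≤ hA.eigenvalues i)
    (z : V → ℝ) : lo * (z ⬝ᵥ z) ≤ z ⬝ᵥ (A *ᵥ z) := by
  have hle : algebraMap ℝ (Matrix V V ℝ) lo ≤ A := by
    rw [algebraMap_le_iff_le_spectrum hA.isSelfAdjoint, hA.spectrum_real_eq_range_eigenvalues]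
    rintro _ ⟨i, rfl⟩
    exact hlo i
  simpa [sub_mulVec, Algebra.algebraMap_eq_smul_one, smul_mulVec, dotProduct_sub] using
    (Matrix.le_iff.mp hle).dotProduct_mulVec_nonneg z

theorem SimpleGraph.le_neg_one_of_adj {V : Type*} [Fintype V] [DecidableEq V]
    {G : SimpleGraph V} [DecidableRel G.Adj] {lo : ℝ}
    (hlo : ∀ z : V → ℝ, lo * (z ⬝ᵥ z) ≤ z ⬝ᵥ (G.adjMatrix ℝ *ᵥ z)) {v w : V}
    (hvw : G.Adj v w) : lo ≤ -1 := by
  have h := hlo (Pi.single v 1 - Pi.single w 1)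
  simp [mulVec_sub, dotProduct_sub, sub_dotProduct, hvw, hvw.symm, hvw.ne, hvw.ne'] at h
  linarith

section ColorPart

variable {V ι R : Type*} [DecidableEq ι] [NonUnitalNonAssocSemiring R]

def colorPart (c : V → ι) (x : V → R) (i : ι) : V → R :=
  fun a => if c a = i then x a else 0

theorem sum_colorPart [Fintype ι] (c : V → ι) (x : V → R) : ∑ i, colorPart c x i = x := by
  ext a
  simp [colorPart, Finset.sum_apply]

theorem colorPart_dotProduct_self [Fintype V] (c : V → ι) (x : V → R) (i : ι) :
    colorPart c x i ⬝ᵥ colorPart c x i = colorPart c x i ⬝ᵥ x := by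
  refine Finset.sum_congr rfl fun a _ => ?_
  by_cases h : c a = i <;> simp [colorPart, h]

theorem colorPart_dotProduct_mulVec_self [Fintype V] {A : Matrix V V R} {c : V → ι}
    (hc : ∀ a b, c a = c b → A a b = 0) (x : V → R) (i : ι) :
    colorPart c x i ⬝ᵥ (A *ᵥ colorPart c x i) = 0 := by
  simp only [dotProduct, mulVec, Finset.mul_sum]
  refine Finset.sum_eq_zero fun a _ => Finset.sum_eq_zero fun b _ => ?_
  by_cases ha : c a = i
  · by_cases hb : c b = i
    · simp [hc a b (ha.trans hb.symm)]
    · simp [colorPart, hb]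
  · simp [colorPart, ha]

end ColorPart

theorem Matrix.hoffman_bound {V ι : Type*} [Fintype V] [Fintype ι] [DecidableEq ι]
    {A : Matrix V V ℝ} {lo ev : ℝ} (hlo : ∀ z : V → ℝ, lo * (z ⬝ᵥ z) ≤ z ⬝ᵥ (A *ᵥ z))
    {x : V → ℝ} (hx : x ≠ 0) (hAx : A *ᵥ x = ev • x) (c : V → ι)
    (hc : ∀ a b, c a = c b → A a b = 0) : ev ≤ (Fintype.card ι - 1) * -lo := by
  set k : ℝ := (Fintype.card ι : ℝ)
  set z : ι → V → ℝ := fun i => k • colorPart c x i - x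
  have hyx : ∑ i, colorPart c x i ⬝ᵥ x = x ⬝ᵥ x := by rw [← sum_dotProduct, sum_colorPart]
  have hxAy : ∑ i, x ⬝ᵥ (A *ᵥ colorPart c x i) = x ⬝ᵥ (A *ᵥ x) := by
    rw [← dotProduct_sum, ← mulVec_sum, sum_colorPart]
  have hnorm : ∑ i, z i ⬝ᵥ z i = (k ^ 2 - k) * (x ⬝ᵥ x) := by
    simp only [z, sub_dotProduct, dotProduct_sub, smul_dotProduct, dotProduct_smul, smul_eq_mul,
      colorPart_dotProduct_self, dotProduct_comm x, Finset.sum_sub_distrib, ← Finset.mul_sum,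
      hyx, Finset.sum_const, Finset.card_univ, nsmul_eq_mul]
    ring
  have hquad : ∑ i, z i ⬝ᵥ (A *ᵥ z i) = -k * ev * (x ⬝ᵥ x) := by
    simp only [z, mulVec_sub, mulVec_smul, sub_dotProduct, dotProduct_sub, smul_dotProduct,
      dotProduct_smul, smul_eq_mul, colorPart_dotProduct_mulVec_self hc, Finset.sum_sub_distrib,
      ← Finset.mul_sum, hyx, hxAy, hAx, Finset.sum_const, Finset.card_univ, nsmul_eq_mul]
    ring
  have hk : 0 < k := by
    obtain ⟨a, -⟩ := Function.ne_iff.mp hx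
    exact Nat.cast_pos.mpr (Fintype.card_pos_iff.mpr ⟨c a⟩)
  have hs : 0 < x ⬝ᵥ x := by simpa using dotProduct_self_star_pos_iff.mpr hx
  have hsummed : (k * (x ⬝ᵥ x)) * (lo * (k - 1)) ≤ (k * (x ⬝ᵥ x)) * -ev :=
    calc (k * (x ⬝ᵥ x)) * (lo * (k - 1)) = ∑ i, lo * (z i ⬝ᵥ z i) := by
          rw [← Finset.mul_sum, hnorm]; ring
      _ ≤ ∑ i, z i ⬝ᵥ (A *ᵥ z i) := Finset.sum_le_sum fun i _ => hlo (z i)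
      _ = (k * (x ⬝ᵥ x)) * -ev := by rw [hquad]; ring
  linarith [le_of_mul_le_mul_left hsummed (by positivity)]

/-- **Hoffman's bound.** For a finite simple graph `G` on `n` vertices with at least one edge
and chromatic number `χ`, the smallest adjacency eigenvalue `μ_n` is negative and
`μ_1 ≤ (χ - 1)·(-μ_n)`; equivalently `χ ≥ 1 + μ_1/(-μ_n)`.
Here `μ` is the non-increasing enumeration of the eigenvalues of the adjacency matrix. -/
theorem stmt_3 {n : ℕ} (hn : 0 < n) (G : SimpleGraph (Fin n)) [DecidableRel G.Adj]
    (he : ∃ v w : Fin n, G.Adj v w)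
    (χ : ℕ) (hχ : G.chromaticNumber = (χ : ℕ∞))
    (hA : (G.adjMatrix ℝ).IsHermitian)
    (μ : Fin n → ℝ) (hμa : Antitone μ)
    (hμ : ∃ e : Equiv.Perm (Fin n), μ = hA.eigenvalues ∘ e) :
    μ ⟨n - 1, by omega⟩ < 0 ∧
    μ ⟨0, hn⟩ ≤ ((χ : ℝ) - 1) * (-μ ⟨n - 1, by omega⟩) ∧
    (χ : ℝ) ≥ 1 + μ ⟨0, hn⟩ / (-μ ⟨n - 1, by omega⟩) := by
  obtain ⟨e, rfl⟩ := hμ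
  obtain ⟨v, w, hvw⟩ := he
  have hmin : ∀ i, hA.eigenvalues (e ⟨n - 1, by omega⟩) ≤ hA.eigenvalues i := fun i => by
    simpa using hμa (show e.symm i ≤ ⟨n - 1, by omega⟩ from
      Fin.le_def.mpr (Nat.le_sub_one_of_lt (e.symm i).isLt))
  have hray := hA.mul_dotProduct_self_le hmin
  have hneg := (G.le_neg_one_of_adj hray hvw).trans_lt (by norm_num : (-1 : ℝ) < 0)
  obtain ⟨C⟩ : G.Colorable χ := SimpleGraph.chromaticNumber_le_iff_colorable.mp hχ.le
  have hbound : hA.eigenvalues (e ⟨0, hn⟩) ≤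
      ((χ : ℝ) - 1) * -hA.eigenvalues (e ⟨n - 1, by omega⟩) := by
    simpa using Matrix.hoffman_bound hray
      (by simpa using hA.eigenvectorBasis.orthonormal.ne_zero (e ⟨0, hn⟩))
      (hA.mulVec_eigenvectorBasis _) C
      fun a b hab => by rw [SimpleGraph.adjMatrix_apply, if_neg fun h => C.valid h hab]
  exact ⟨hneg, hbound, le_sub_iff_add_le'.mp ((div_le_iff₀ (neg_pos.mpr hneg)).mpr hbound)⟩
end

section
/- (Nikiforov's hybrid bound.) Let G be a finite simple graph on n vertices with at least one edge and chromatic number χ. Then μ_1 ≤ (χ − 1)·(θ_1 − μ_1); equivalently, χ ≥ 1 + μ_1/(θ_1 − μ_1). -/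
/-!
Let `x` be a unit eigenvector of `A` for `μ₁` and split it along a proper colouring into the
pieces `x₁, …, x_χ` supported on the colour classes. Applying `yᵀ L y ≤ θ₁ ‖y‖²` to all
differences `xₛ - xₜ` and summing gives
`χ ∑ₛ xₛᵀ L xₛ - xᵀ L x ≤ θ₁ (χ ∑ₛ ‖xₛ‖² - ‖x‖²) = θ₁ (χ - 1)`.
No edge joins two vertices of the same colour, so `∑ₛ xₛᵀ L xₛ = xᵀ D x = xᵀ L x + μ₁`;
with `xᵀ L x ≥ 0` this is `χ μ₁ ≤ (χ - 1) θ₁`. Dividing needs `μ₁ ≥ 0` (the diagonal of `A`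
vanishes), which also covers `θ₁ = μ₁`, where the quotient is the junk value `μ₁ / 0 = 0`.
-/

open Matrix Finset
open scoped ComplexOrder

theorem Set.indicator_preimage_singleton_apply {β α R : Type*} [DecidableEq α] [Zero R]
    (c : β → α) (x : β → R) (s : α) (v : β) :
    (c ⁻¹' {s}).indicator x v = if c v = s then x v else 0 := by
  classical
  simp [Set.indicator_apply]

theorem Set.sum_indicator_preimage_singleton {β α R : Type*} [Fintype α] [DecidableEq α]
    [AddCommMonoid R] (c : β → α) (x : β → R) : ∑ s, (c ⁻¹' {s}).indicator x = x := by
  ext v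
  simp [Set.indicator_preimage_singleton_apply]

theorem Fin.le_comp_perm_zero_of_antitone {α : Type*} [Preorder α] {n : ℕ} (hn : 0 < n)
    {f : Fin n → α} {e : Equiv.Perm (Fin n)} (h : Antitone (f ∘ e)) (i : Fin n) :
    f i ≤ (f ∘ e) ⟨0, hn⟩ := by
  simpa using h (show (⟨0, hn⟩ : Fin n) ≤ e.symm i from Nat.zero_le _)

theorem div_le_of_le_mul_of_nonneg {𝕜 : Type*} [Field 𝕜] [LinearOrder 𝕜] [IsStrictOrderedRing 𝕜]
    {a b c : 𝕜} (ha : 0 ≤ a) (hc : 0 ≤ c) (h : a ≤ c * b) : a / b ≤ c := by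
  rcases le_or_gt b 0 with hb | hb
  · exact (div_nonpos_of_nonneg_of_nonpos ha hb).trans hc
  · exact (div_le_iff₀ hb).mpr h

namespace Matrix

section CommRing

variable {n κ α R : Type*} [Fintype n] [Fintype κ] [Fintype α] [DecidableEq α] [CommRing R]

theorem sum_sum_dotProduct_mulVec_sub (M : Matrix n n R) (x : κ → n → R) :
    ∑ s, ∑ t, (x s - x t) ⬝ᵥ (M *ᵥ (x s - x t))
      = 2 * Fintype.card κ * ∑ s, x s ⬝ᵥ (M *ᵥ x s)
        - 2 * ((∑ s, x s) ⬝ᵥ (M *ᵥ ∑ s, x s)) := by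
  have hcross : (∑ s, x s) ⬝ᵥ (M *ᵥ ∑ s, x s) = ∑ s, ∑ t, x s ⬝ᵥ (M *ᵥ x t) := by
    simp only [mulVec_sum, sum_dotProduct, dotProduct_sum]
    exact sum_comm
  have hswap : ∑ s, ∑ t, x t ⬝ᵥ (M *ᵥ x s) = ∑ s, ∑ t, x s ⬝ᵥ (M *ᵥ x t) := sum_comm
  simp only [mulVec_sub, dotProduct_sub, sub_dotProduct, sum_sub_distrib, sum_const, card_univ,
    nsmul_eq_mul, ← mul_sum, hcross, hswap]
  ring

theorem sum_dotProduct_mulVec_indicator_preimage_singleton (M : Matrix n n R) (c : n → α)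
    (x : n → R) :
    ∑ s, (c ⁻¹' {s}).indicator x ⬝ᵥ (M *ᵥ (c ⁻¹' {s}).indicator x)
      = ∑ u, ∑ v, if c u = c v then x u * M u v * x v else 0 := by
  simp only [dotProduct, mulVec, mul_sum, Set.indicator_preimage_singleton_apply]
  rw [sum_comm]
  refine sum_congr rfl fun u _ => ?_
  rw [sum_comm]
  refine sum_congr rfl fun v _ => ?_
  by_cases h : c u = c v <;> simp [h, mul_ite, mul_comm, mul_left_comm]

theorem sum_dotProduct_indicator_preimage_singleton (c : n → α) (x : n → R) :
    ∑ s, (c ⁻¹' {s}).indicator x ⬝ᵥ (c ⁻¹' {s}).indicator x = x ⬝ᵥ x := by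
  simp only [dotProduct, Set.indicator_preimage_singleton_apply]
  rw [sum_comm]
  refine sum_congr rfl fun v _ => ?_
  simp [ite_mul, mul_ite]

end CommRing

variable {n κ : Type*} [Fintype n] [DecidableEq n] [Fintype κ]

theorem IsHermitian.posSemidef_smul_one_sub {𝕜 : Type*} [RCLike 𝕜] {A : Matrix n n 𝕜}
    (hA : A.IsHermitian) {t : ℝ} (ht : ∀ i, hA.eigenvalues i ≤ t) :
    (t • 1 - A).PosSemidef := by
  have hdiag : diagonal (RCLike.ofReal ∘ fun i => t - hA.eigenvalues i)
      = (t : 𝕜) • (1 : Matrix n n 𝕜) - diagonal (RCLike.ofReal ∘ hA.eigenvalues) := by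
    ext i j
    by_cases h : i = j <;> simp [h, Algebra.algebraMap_eq_smul_one, sub_smul]
  have hconj : t • 1 - A = Unitary.conjStarAlgAut 𝕜 _ hA.eigenvectorUnitary
      (diagonal (RCLike.ofReal ∘ fun i => t - hA.eigenvalues i)) := by
    conv_lhs => rw [hA.spectral_theorem]
    rw [hdiag, map_sub, map_smul, map_one, RCLike.real_smul_eq_coe_smul (K := 𝕜)]
  rw [hconj, Unitary.conjStarAlgAut_apply, Unitary.isUnit_coe.posSemidef_star_right_conjugate_iff]
  simpa [posSemidef_diagonal_iff] using ht

theorem IsHermitian.dotProduct_mulVec_le {A : Matrix n n ℝ} (hA : A.IsHermitian) {t : ℝ}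
    (ht : ∀ i, hA.eigenvalues i ≤ t) (x : n → ℝ) : x ⬝ᵥ (A *ᵥ x) ≤ t * (x ⬝ᵥ x) := by
  simpa [sub_mulVec, smul_mulVec, dotProduct_sub] using
    (hA.posSemidef_smul_one_sub ht).dotProduct_mulVec_nonneg x

theorem IsHermitian.exists_dotProduct_mulVec_eq_eigenvalues {A : Matrix n n ℝ}
    (hA : A.IsHermitian) (i : n) :
    ∃ x : n → ℝ, x ⬝ᵥ x = 1 ∧ x ⬝ᵥ (A *ᵥ x) = hA.eigenvalues i := by
  refine ⟨hA.eigenvectorBasis i, ?_, by simpa using (hA.eigenvalues_eq i).symm⟩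
  have h := real_inner_self_eq_norm_sq (hA.eigenvectorBasis i)
  rw [hA.eigenvectorBasis.orthonormal.1 i, EuclideanSpace.inner_eq_star_dotProduct] at h
  simpa using h

theorem IsHermitian.card_mul_sum_dotProduct_mulVec_sub_le {A : Matrix n n ℝ}
    (hA : A.IsHermitian) {t : ℝ} (ht : ∀ i, hA.eigenvalues i ≤ t) (x : κ → n → ℝ) :
    Fintype.card κ * ∑ s, x s ⬝ᵥ (A *ᵥ x s) - (∑ s, x s) ⬝ᵥ (A *ᵥ ∑ s, x s)
      ≤ t * (Fintype.card κ * ∑ s, x s ⬝ᵥ x s - (∑ s, x s) ⬝ᵥ ∑ s, x s) := by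
  have hpairs : ∑ s, ∑ u, (x s - x u) ⬝ᵥ (A *ᵥ (x s - x u))
      ≤ t * ∑ s, ∑ u, (x s - x u) ⬝ᵥ ((1 : Matrix n n ℝ) *ᵥ (x s - x u)) := by
    simp only [one_mulVec, mul_sum]
    exact sum_le_sum fun s _ => sum_le_sum fun u _ => hA.dotProduct_mulVec_le ht _
  rw [sum_sum_dotProduct_mulVec_sub, sum_sum_dotProduct_mulVec_sub] at hpairs
  simp only [one_mulVec] at hpairs
  linarith

end Matrix

namespace SimpleGraph

variable {V α : Type*} [Fintype V] [DecidableEq V] [Fintype α] [DecidableEq α]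
  {G : SimpleGraph V} [DecidableRel G.Adj]

theorem Coloring.sum_lapMatrix_indicator_preimage_singleton {R : Type*} [CommRing R]
    (C : G.Coloring α) (x : V → R) :
    ∑ s, (C ⁻¹' {s}).indicator x ⬝ᵥ (G.lapMatrix R *ᵥ (C ⁻¹' {s}).indicator x)
      = x ⬝ᵥ (G.degMatrix R *ᵥ x) := by
  rw [sum_dotProduct_mulVec_indicator_preimage_singleton, dotProduct_mulVec_degMatrix]
  refine sum_congr rfl fun u _ => ?_
  rw [sum_eq_single u]
  · simp [lapMatrix, degMatrix, mul_comm]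
  · intro v _ hvu
    by_cases h : C u = C v
    · have hnadj : ¬ G.Adj u v := fun hadj => C.valid hadj h
      simp [h, lapMatrix, degMatrix, hvu.symm, hnadj]
    · simp [h]
  · simp

theorem nonneg_of_forall_eigenvalues_adjMatrix_le [Nonempty V] (hA : (G.adjMatrix ℝ).IsHermitian)
    {t : ℝ} (ht : ∀ i, hA.eigenvalues i ≤ t) : 0 ≤ t := by
  obtain ⟨v⟩ := ‹Nonempty V›
  simpa [mulVec_single] using hA.dotProduct_mulVec_le ht (Pi.single v 1)

theorem Coloring.card_mul_dotProduct_adjMatrix_le [Nonempty α] (C : G.Coloring α)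
    (hL : (G.lapMatrix ℝ).IsHermitian) {θ : ℝ} (hθ : ∀ i, hL.eigenvalues i ≤ θ) (x : V → ℝ) :
    Fintype.card α * (x ⬝ᵥ (G.adjMatrix ℝ *ᵥ x)) ≤ (Fintype.card α - 1) * θ * (x ⬝ᵥ x) := by
  have hsum := hL.card_mul_sum_dotProduct_mulVec_sub_le hθ fun s => (C ⁻¹' {s}).indicator x
  rw [Set.sum_indicator_preimage_singleton, C.sum_lapMatrix_indicator_preimage_singleton,
    sum_dotProduct_indicator_preimage_singleton] at hsum
  have hsplit : x ⬝ᵥ (G.lapMatrix ℝ *ᵥ x)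
      = x ⬝ᵥ (G.degMatrix ℝ *ᵥ x) - x ⬝ᵥ (G.adjMatrix ℝ *ᵥ x) := by
    rw [lapMatrix, sub_mulVec, dotProduct_sub]
  have hL_nonneg : 0 ≤ x ⬝ᵥ (G.lapMatrix ℝ *ᵥ x) := by
    simpa using (posSemidef_lapMatrix ℝ G).dotProduct_mulVec_nonneg x
  have hcard : (1 : ℝ) ≤ Fintype.card α := by exact_mod_cast Fintype.card_pos
  nlinarith [mul_nonneg (sub_nonneg.mpr hcard) hL_nonneg]

end SimpleGraph

theorem stmt_4_general {n : ℕ} (hn : 0 < n) (G : SimpleGraph (Fin n)) [DecidableRel G.Adj]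
    (χ : ℕ) (hχ : G.chromaticNumber = (χ : ℕ∞))
    (hA : (G.adjMatrix ℝ).IsHermitian)
    (hL : (G.lapMatrix ℝ).IsHermitian)
    (μ θ : Fin n → ℝ)
    (hμa : Antitone μ) (hμ : ∃ e : Equiv.Perm (Fin n), μ = hA.eigenvalues ∘ e)
    (hθa : Antitone θ) (hθ : ∃ e : Equiv.Perm (Fin n), θ = hL.eigenvalues ∘ e) :
    μ ⟨0, hn⟩ ≤ ((χ : ℝ) - 1) * (θ ⟨0, hn⟩ - μ ⟨0, hn⟩) ∧
    (χ : ℝ) ≥ 1 + μ ⟨0, hn⟩ / (θ ⟨0, hn⟩ - μ ⟨0, hn⟩) := by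
  obtain ⟨C⟩ : G.Colorable χ := G.chromaticNumber_le_iff_colorable.mp hχ.le
  have : Nonempty (Fin χ) := ⟨C ⟨0, hn⟩⟩
  have : Nonempty (Fin n) := ⟨⟨0, hn⟩⟩
  obtain ⟨eμ, rfl⟩ := hμ
  obtain ⟨eθ, rfl⟩ := hθ
  have hμ_top := Fin.le_comp_perm_zero_of_antitone hn hμa
  have hθ_top := Fin.le_comp_perm_zero_of_antitone hn hθa
  obtain ⟨x, hx, hxA⟩ := hA.exists_dotProduct_mulVec_eq_eigenvalues (eμ ⟨0, hn⟩)
  have hχμ := C.card_mul_dotProduct_adjMatrix_le hL hθ_top x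
  rw [hx, hxA, Fintype.card_fin] at hχμ
  have hμ_nonneg := SimpleGraph.nonneg_of_forall_eigenvalues_adjMatrix_le hA hμ_top
  have hχ : (1 : ℝ) ≤ χ := by exact_mod_cast Fintype.card_pos.trans_eq (Fintype.card_fin χ)
  have hbound : (hA.eigenvalues ∘ eμ) ⟨0, hn⟩
      ≤ ((χ : ℝ) - 1) * ((hL.eigenvalues ∘ eθ) ⟨0, hn⟩ - (hA.eigenvalues ∘ eμ) ⟨0, hn⟩) := by
    simp only [Function.comp_apply] at hχμ ⊢
    linarith
  refine ⟨hbound, ?_⟩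
  linarith [div_le_of_le_mul_of_nonneg hμ_nonneg (sub_nonneg.mpr hχ) hbound]

/-- **Nikiforov's hybrid bound.** For a finite simple graph `G` on `n` vertices with at least
one edge and chromatic number `χ`, `μ_1 ≤ (χ - 1)·(θ_1 - μ_1)`; equivalently
`χ ≥ 1 + μ_1/(θ_1 - μ_1)`.  Here `μ` and `θ` are the non-increasing enumerations of the
eigenvalues of the adjacency matrix and of the Laplacian matrix, respectively. -/
theorem stmt_4 {n : ℕ} (hn : 0 < n) (G : SimpleGraph (Fin n)) [DecidableRel G.Adj]
    (he : ∃ v w : Fin n, G.Adj v w)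
    (χ : ℕ) (hχ : G.chromaticNumber = (χ : ℕ∞))
    (hA : (G.adjMatrix ℝ).IsHermitian)
    (hL : (G.lapMatrix ℝ).IsHermitian)
    (μ θ : Fin n → ℝ)
    (hμa : Antitone μ) (hμ : ∃ e : Equiv.Perm (Fin n), μ = hA.eigenvalues ∘ e)
    (hθa : Antitone θ) (hθ : ∃ e : Equiv.Perm (Fin n), θ = hL.eigenvalues ∘ e) :
    μ ⟨0, hn⟩ ≤ ((χ : ℝ) - 1) * (θ ⟨0, hn⟩ - μ ⟨0, hn⟩) ∧
    (χ : ℝ) ≥ 1 + μ ⟨0, hn⟩ / (θ ⟨0, hn⟩ - μ ⟨0, hn⟩) :=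
  stmt_4_general hn G χ hχ hA hL μ θ hμa hμ hθa hθ
end

section
/- (Kolotilina's first bound.) Let G be a finite simple graph on n vertices with at least one edge and chromatic number χ. Then μ_1 ≤ (χ − 1)·(μ_1 − δ_1 + θ_1); equivalently, χ ≥ 1 + μ_1/(μ_1 − δ_1 + θ_1). -/
/-!
Let `z` be a unit vector with `zᵀQz = δ₁` and split it along the colour classes of a proper
`χ`-colouring, `z = ∑ₖ yₖ`. Since `A` vanishes on each colour class, `∑ₖ yₖᵀLyₖ = zᵀDz`,
and applying `xᵀLx ≤ θ₁‖x‖²` to the `χ` vectors `z - χ yₖ` and summing gives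
`(χ - 2)·zᵀDz + δ₁ ≤ (χ - 1)·θ₁`. Together with `δ₁ - zᵀDz = zᵀAz ≤ μ₁` this is the bound.
-/

open Matrix Finset

theorem Antitone.apply_le_apply_zero_of_eq_comp {α : Type*} [Preorder α] {n : ℕ} (hn : 0 < n)
    {f g : Fin n → α} (hf : Antitone f) (h : ∃ e : Equiv.Perm (Fin n), f = g ∘ e) (i : Fin n) :
    g i ≤ f ⟨0, hn⟩ := by
  obtain ⟨e, rfl⟩ := h
  simpa using hf (show (⟨0, hn⟩ : Fin n) ≤ e.symm i from Nat.zero_le _)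

theorem Matrix.sum_dotProduct_mulVec_sub_card_smul {R ι n : Type*} [CommRing R]
    [Fintype ι] [Fintype n] (M : Matrix n n R) {y : ι → n → R} {z : n → R} (hy : ∑ k, y k = z) :
    ∑ k, (z - (Fintype.card ι : R) • y k) ⬝ᵥ (M *ᵥ (z - (Fintype.card ι : R) • y k)) =
      (Fintype.card ι : R) ^ 2 * ∑ k, y k ⬝ᵥ (M *ᵥ y k) - Fintype.card ι * (z ⬝ᵥ (M *ᵥ z)) := by
  have hleft : ∑ k, z ⬝ᵥ (M *ᵥ y k) = z ⬝ᵥ (M *ᵥ z) := by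
    rw [← dotProduct_sum, ← mulVec_sum, hy]
  have hright : ∑ k, y k ⬝ᵥ (M *ᵥ z) = z ⬝ᵥ (M *ᵥ z) := by
    rw [← sum_dotProduct, hy]
  simp only [mulVec_sub, mulVec_smul, dotProduct_sub, sub_dotProduct, dotProduct_smul,
    smul_dotProduct, smul_eq_mul, sum_sub_distrib, ← mul_sum, hleft, hright, sum_const, card_univ,
    nsmul_eq_mul]
  ring

namespace Matrix.IsHermitian

open Unitary

variable {n : Type*} [Fintype n] [DecidableEq n] {M : Matrix n n ℝ}

theorem dotProduct_mulVec_le_of_eigenvalues_le (hM : M.IsHermitian) {t : ℝ}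
    (ht : ∀ i, hM.eigenvalues i ≤ t) (x : n → ℝ) : x ⬝ᵥ (M *ᵥ x) ≤ t * (x ⬝ᵥ x) := by
  have hpsd : (t • 1 - M).PosSemidef := by
    have h : t • 1 - M = conjStarAlgAut ℝ _ hM.eigenvectorUnitary
        (diagonal fun i => t - hM.eigenvalues i) := by
      conv_lhs => rw [hM.spectral_theorem]
      rw [← diagonal_sub, ← smul_one_eq_diagonal, map_sub, map_smul, map_one]
      simp
    rw [h, conjStarAlgAut_apply, isUnit_coe.posSemidef_star_right_conjugate_iff,
      posSemidef_diagonal_iff]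
    exact fun i => sub_nonneg.2 (ht i)
  simpa [sub_mulVec, dotProduct_sub, smul_mulVec] using hpsd.dotProduct_mulVec_nonneg x

theorem exists_dotProduct_self_eq_one (hM : M.IsHermitian) (j : n) :
    ∃ z : n → ℝ, z ⬝ᵥ z = 1 ∧ z ⬝ᵥ (M *ᵥ z) = hM.eigenvalues j := by
  refine ⟨hM.eigenvectorBasis j, ?_, by simpa [dotProduct_comm] using (hM.eigenvalues_eq j).symm⟩
  have h := real_inner_self_eq_norm_sq (hM.eigenvectorBasis j)
  rw [hM.eigenvectorBasis.orthonormal.1 j, EuclideanSpace.inner_eq_star_dotProduct] at h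
  simpa using h

end Matrix.IsHermitian

namespace SimpleGraph

variable {V : Type*} {G : SimpleGraph V}

theorem one_le_of_adj_of_dotProduct_adjMatrix_mulVec_le [Fintype V] [DecidableEq V]
    [DecidableRel G.Adj] {μ : ℝ} (hμ : ∀ x, x ⬝ᵥ (G.adjMatrix ℝ *ᵥ x) ≤ μ * (x ⬝ᵥ x))
    {v w : V} (hvw : G.Adj v w) : 1 ≤ μ := by
  set x : V → ℝ := Pi.single v 1 + Pi.single w 1
  have hAx : x ⬝ᵥ (G.adjMatrix ℝ *ᵥ x) = 2 := by
    norm_num [x, mulVec_add, dotProduct_add, add_dotProduct, mulVec_single, hvw, adjMatrix_apply,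
      hvw.symm]
  have hxx : x ⬝ᵥ x = 2 := by
    norm_num [x, dotProduct_add, hvw.ne, hvw.ne.symm]
  have hxμ := hμ x
  rw [hAx, hxx] at hxμ
  linarith

theorem IsIndepSet.indicator_dotProduct_adjMatrix_mulVec_eq_zero [Fintype V] [DecidableRel G.Adj]
    {R : Type*} [NonAssocSemiring R] {s : Set V} (hs : G.IsIndepSet s) (x : V → R) :
    s.indicator x ⬝ᵥ (G.adjMatrix R *ᵥ s.indicator x) = 0 := by
  refine sum_eq_zero fun a _ => ?_
  by_cases ha : a ∈ s
  · refine mul_eq_zero_of_right _ (sum_eq_zero fun b _ => ?_)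
    by_cases hb : b ∈ s
    · have hab : ¬G.Adj a b := fun h => hs ha hb h.ne h
      simp [adjMatrix_apply, hab]
    · simp [hb]
  · simp [ha]

namespace Coloring

variable {ι : Type*} [Fintype ι]

theorem sum_indicator_colorClass (C : G.Coloring ι) {R : Type*} [AddCommMonoid R] (x : V → R) :
    ∑ k, (C.colorClass k).indicator x = x := by
  ext a
  rw [Finset.sum_apply, sum_eq_single (C a) (fun k _ hk => by simp [colorClass, Ne.symm hk])
    (by simp)]
  simp [colorClass]

theorem sum_indicator_colorClass_dotProduct_diagonal_mulVec [Fintype V] [DecidableEq V]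
    (C : G.Coloring ι) {R : Type*} [CommSemiring R] (d x : V → R) :
    ∑ k, (C.colorClass k).indicator x ⬝ᵥ (diagonal d *ᵥ (C.colorClass k).indicator x) =
      x ⬝ᵥ (diagonal d *ᵥ x) := by
  simp only [dotProduct, mulVec_diagonal]
  rw [sum_comm]
  refine sum_congr rfl fun a _ => ?_
  rw [sum_eq_single (C a) (fun k _ hk => by simp [colorClass, Ne.symm hk]) (by simp)]
  simp [colorClass]

variable [Fintype V] [DecidableEq V] [DecidableRel G.Adj]

theorem card_sub_two_mul_add_le [Nonempty ι] (C : G.Coloring ι) {θ δ : ℝ}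
    (hθ : ∀ x, x ⬝ᵥ (G.lapMatrix ℝ *ᵥ x) ≤ θ * (x ⬝ᵥ x)) {z : V → ℝ} (hz : z ⬝ᵥ z = 1)
    (hzQ : z ⬝ᵥ ((G.degMatrix ℝ + G.adjMatrix ℝ) *ᵥ z) = δ) :
    (Fintype.card ι - 2) * (z ⬝ᵥ (G.degMatrix ℝ *ᵥ z)) + δ ≤ (Fintype.card ι - 1) * θ := by
  set c : ℝ := (Fintype.card ι : ℝ)
  set d := z ⬝ᵥ (G.degMatrix ℝ *ᵥ z)
  set y := fun k => (C.colorClass k).indicator z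
  have hy : ∑ k, y k = z := C.sum_indicator_colorClass z
  have hzL : z ⬝ᵥ (G.lapMatrix ℝ *ᵥ z) = 2 * d - δ := by
    rw [← hzQ, lapMatrix, sub_mulVec, add_mulVec, dotProduct_sub, dotProduct_add]
    ring
  have hyL : ∑ k, y k ⬝ᵥ (G.lapMatrix ℝ *ᵥ y k) = d := by
    simp only [lapMatrix, sub_mulVec, dotProduct_sub,
      (C.isIndepSet_colorClass _).indicator_dotProduct_adjMatrix_mulVec_eq_zero, sub_zero, y]
    exact C.sum_indicator_colorClass_dotProduct_diagonal_mulVec _ z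
  have hyy : ∑ k, y k ⬝ᵥ y k = 1 := by
    simpa [diagonal_one, hz] using C.sum_indicator_colorClass_dotProduct_diagonal_mulVec 1 z
  have hnorm := sum_dotProduct_mulVec_sub_card_smul (1 : Matrix V V ℝ) hy
  simp only [one_mulVec, hyy, hz] at hnorm
  have hpinch : ∑ k, (z - c • y k) ⬝ᵥ (G.lapMatrix ℝ *ᵥ (z - c • y k)) ≤
      θ * ∑ k, (z - c • y k) ⬝ᵥ (z - c • y k) := by
    rw [mul_sum]
    exact sum_le_sum fun k _ => hθ _
  rw [sum_dotProduct_mulVec_sub_card_smul _ hy, hnorm, hzL, hyL] at hpinch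
  have hc : 0 < c := by simp [c, Fintype.card_pos]
  refine le_of_mul_le_mul_left ?_ hc
  linarith

theorem le_card_sub_one_mul (C : G.Coloring ι) (hC : 2 ≤ Fintype.card ι) {μ θ δ : ℝ}
    (hμ : ∀ x, x ⬝ᵥ (G.adjMatrix ℝ *ᵥ x) ≤ μ * (x ⬝ᵥ x))
    (hθ : ∀ x, x ⬝ᵥ (G.lapMatrix ℝ *ᵥ x) ≤ θ * (x ⬝ᵥ x)) {z : V → ℝ} (hz : z ⬝ᵥ z = 1)
    (hzQ : z ⬝ᵥ ((G.degMatrix ℝ + G.adjMatrix ℝ) *ᵥ z) = δ) :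
    μ ≤ (Fintype.card ι - 1) * (μ - δ + θ) := by
  have : Nonempty ι := Fintype.card_pos_iff.1 (by omega)
  have hkey := C.card_sub_two_mul_add_le hθ hz hzQ
  have hzA : δ - z ⬝ᵥ (G.degMatrix ℝ *ᵥ z) ≤ μ := by
    have hzμ := hμ z
    rw [hz, mul_one] at hzμ
    rw [← hzQ, add_mulVec, dotProduct_add]
    linarith
  have hC' : (2 : ℝ) ≤ Fintype.card ι := by exact_mod_cast hC
  linarith [mul_nonneg (sub_nonneg.2 hC') (sub_nonneg.2 hzA)]

end Coloring

end SimpleGraph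

open SimpleGraph

theorem stmt_5_general {n : ℕ} (hn : 0 < n) (G : SimpleGraph (Fin n)) [DecidableRel G.Adj]
    (he : ∃ v w : Fin n, G.Adj v w)
    (χ : ℕ) (hχ : G.chromaticNumber = (χ : ℕ∞))
    (hA : (G.adjMatrix ℝ).IsHermitian)
    (hL : (G.lapMatrix ℝ).IsHermitian)
    (hQ : (G.degMatrix ℝ + G.adjMatrix ℝ).IsHermitian)
    (μ θ δ : Fin n → ℝ)
    (hμa : Antitone μ) (hμ : ∃ e : Equiv.Perm (Fin n), μ = hA.eigenvalues ∘ e)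
    (hθa : Antitone θ) (hθ : ∃ e : Equiv.Perm (Fin n), θ = hL.eigenvalues ∘ e)
    (hδ : ∃ e : Equiv.Perm (Fin n), δ = hQ.eigenvalues ∘ e) :
    μ ⟨0, hn⟩ ≤ ((χ : ℝ) - 1) * (μ ⟨0, hn⟩ - δ ⟨0, hn⟩ + θ ⟨0, hn⟩) ∧
    (χ : ℝ) ≥ 1 + μ ⟨0, hn⟩ / (μ ⟨0, hn⟩ - δ ⟨0, hn⟩ + θ ⟨0, hn⟩) := by
  obtain ⟨v, w, hvw⟩ := he
  have hμ₁ := hA.dotProduct_mulVec_le_of_eigenvalues_le (hμa.apply_le_apply_zero_of_eq_comp hn hμ)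
  have hθ₁ := hL.dotProduct_mulVec_le_of_eigenvalues_le (hθa.apply_le_apply_zero_of_eq_comp hn hθ)
  obtain ⟨e, rfl⟩ := hδ
  obtain ⟨z, hz, hzQ⟩ := hQ.exists_dotProduct_self_eq_one (e ⟨0, hn⟩)
  obtain ⟨C⟩ : G.Colorable χ := chromaticNumber_le_iff_colorable.mp hχ.le
  have hχ₂ : 2 ≤ χ := by exact_mod_cast hχ ▸ two_le_chromaticNumber_of_adj hvw
  have hbound := C.le_card_sub_one_mul (by simpa using hχ₂) hμ₁ hθ₁ hz hzQ
  rw [Fintype.card_fin] at hbound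
  refine ⟨hbound, ?_⟩
  have hμ_pos : 0 < μ ⟨0, hn⟩ :=
    one_pos.trans_le (one_le_of_adj_of_dotProduct_adjMatrix_mulVec_le hμ₁ hvw)
  have hsum_pos := pos_of_mul_pos_right (hμ_pos.trans_le hbound)
    (sub_nonneg.2 (Nat.one_le_cast.2 (by omega)))
  rw [ge_iff_le, ← le_sub_iff_add_le']
  exact (div_le_iff₀ hsum_pos).2 hbound

/-- **Kolotilina's first bound.** For a finite simple graph `G` on `n` vertices with at least
one edge and chromatic number `χ`, `μ_1 ≤ (χ - 1)·(μ_1 - δ_1 + θ_1)`; equivalently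
`χ ≥ 1 + μ_1/(μ_1 - δ_1 + θ_1)`.  Here `μ`, `θ`, `δ` are the non-increasing enumerations of
the eigenvalues of the adjacency matrix, the Laplacian `L = D - A` and the signless
Laplacian `Q = D + A`, respectively. -/
theorem stmt_5 {n : ℕ} (hn : 0 < n) (G : SimpleGraph (Fin n)) [DecidableRel G.Adj]
    (he : ∃ v w : Fin n, G.Adj v w)
    (χ : ℕ) (hχ : G.chromaticNumber = (χ : ℕ∞))
    (hA : (G.adjMatrix ℝ).IsHermitian)
    (hL : (G.lapMatrix ℝ).IsHermitian)
    (hQ : (G.degMatrix ℝ + G.adjMatrix ℝ).IsHermitian)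
    (μ θ δ : Fin n → ℝ)
    (hμa : Antitone μ) (hμ : ∃ e : Equiv.Perm (Fin n), μ = hA.eigenvalues ∘ e)
    (hθa : Antitone θ) (hθ : ∃ e : Equiv.Perm (Fin n), θ = hL.eigenvalues ∘ e)
    (hδa : Antitone δ) (hδ : ∃ e : Equiv.Perm (Fin n), δ = hQ.eigenvalues ∘ e) :
    μ ⟨0, hn⟩ ≤ ((χ : ℝ) - 1) * (μ ⟨0, hn⟩ - δ ⟨0, hn⟩ + θ ⟨0, hn⟩) ∧
    (χ : ℝ) ≥ 1 + μ ⟨0, hn⟩ / (μ ⟨0, hn⟩ - δ ⟨0, hn⟩ + θ ⟨0, hn⟩) :=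
  stmt_5_general hn G he χ hχ hA hL hQ μ θ δ hμa hμ hθa hθ hδ
end

section
/- (Generalized Hoffman bound.) Let G be a finite simple graph on n vertices with at least one edge and chromatic number χ. Then for every m with 1 ≤ m ≤ n: Σ_{i=1}^m μ_i ≤ (χ − 1)·Σ_{i=1}^m (−μ_{n+1−i}); equivalently, whenever Σ_{i=1}^m (−μ_{n+1−i}) > 0 one has χ ≥ 1 + (Σ_{i=1}^m μ_i)/(Σ_{i=1}^m (−μ_{n+1−i})). -/
/-!
Let `P` be the orthogonal projection onto the eigenvectors of the `m` largest eigenvalues of `A`.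
For a proper colouring `c` with `χ` colours and a primitive `χ`-th root of unity `ζ`, put
`D = diag(ζ ^ c v)`. The conjugates `D ^ j * A * (D ^ j)ᴴ`, `j < χ`, sum to zero: their `(u, v)`
entries are `A u v * z ^ j` with `z = ζ ^ (c u - c v)`, and `z ≠ 1` whenever `A u v ≠ 0`.
Applying `tr (P * ·)` gives `Σ_{i<m} μ i = - Σ_{0<j<χ} tr (P * D ^ j * A * (D ^ j)ᴴ)`. Every
term on the right is `Σ_k s k * μ k` for weights `0 ≤ s k ≤ 1` summing to `m`, read off the
unitary `D ^ j` in the eigenbasis, so it is at least the sum of the `m` smallest eigenvalues.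
-/

open Matrix Finset

section Spectral

variable {𝕜 n : Type*} [RCLike 𝕜] [Fintype n] [DecidableEq n]

theorem submatrix_id_mem_unitaryGroup {U : Matrix n n 𝕜} (hU : U ∈ unitaryGroup n 𝕜)
    (e : Equiv.Perm n) : U.submatrix id e ∈ unitaryGroup n 𝕜 := by
  rw [mem_unitaryGroup_iff, star_eq_conjTranspose, conjTranspose_submatrix,
    submatrix_mul_equiv _ _ _ e, ← star_eq_conjTranspose, mem_unitaryGroup_iff.mp hU,
    submatrix_id_id]

theorem map_algebraMap_mem_unitaryGroup {U : Matrix n n ℝ} (hU : U ∈ unitaryGroup n ℝ) :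
    U.map (algebraMap ℝ 𝕜) ∈ unitaryGroup n 𝕜 := by
  rw [mem_unitaryGroup_iff, star_eq_conjTranspose, ← conjTranspose_map _ fun x => by simp,
    ← Matrix.map_mul, ← star_eq_conjTranspose, mem_unitaryGroup_iff.mp hU,
    Matrix.map_one _ (map_zero _) (map_one _)]

theorem Matrix.IsHermitian.exists_unitary_map_algebraMap_eq {A : Matrix n n ℝ} (hA : A.IsHermitian)
    (e : Equiv.Perm n) : ∃ U ∈ unitaryGroup n 𝕜,
      A.map (algebraMap ℝ 𝕜) = U * diagonal (RCLike.ofReal ∘ hA.eigenvalues ∘ e) * Uᴴ := by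
  set V := (hA.eigenvectorUnitary : Matrix n n ℝ).submatrix id e
  have hV := submatrix_id_mem_unitaryGroup hA.eigenvectorUnitary.2 e
  have hspec : A = V * diagonal (hA.eigenvalues ∘ e) * Vᴴ := by
    conv_lhs => rw [hA.spectral_theorem]
    rw [Unitary.conjStarAlgAut_apply, star_eq_conjTranspose, ← submatrix_diagonal_equiv,
      conjTranspose_submatrix, submatrix_mul_equiv, submatrix_mul_equiv, submatrix_id_id]
    rfl
  refine ⟨V.map (algebraMap ℝ 𝕜), map_algebraMap_mem_unitaryGroup hV, ?_⟩
  conv_lhs => rw [hspec]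
  rw [Matrix.map_mul, Matrix.map_mul, diagonal_map (map_zero _),
    conjTranspose_map _ fun x => by simp]
  rfl

end Spectral

theorem sum_le_sum_mul_of_le_pivot {ι : Type*} [Fintype ι] {t : Finset ι}
    {μ s : ι → ℝ} {c : ℝ} (hlow : ∀ i ∈ t, μ i ≤ c) (hhigh : ∀ i ∉ t, c ≤ μ i)
    (hs0 : ∀ i, 0 ≤ s i) (hs1 : ∀ i, s i ≤ 1) (hsum : ∑ i, s i = #t) :
    ∑ i ∈ t, μ i ≤ ∑ i, s i * μ i := by
  classical
  have hbalance : ∑ i, (s i - if i ∈ t then 1 else 0) * c = 0 := by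
    rw [← sum_mul, sum_sub_distrib, hsum, sum_boole, filter_mem_eq_inter, univ_inter,
      sub_self, zero_mul]
  have hterm : ∀ i, (s i - if i ∈ t then 1 else 0) * c ≤ (s i - if i ∈ t then 1 else 0) * μ i := by
    intro i
    by_cases hi : i ∈ t
    · simp only [hi, if_true]; nlinarith [hlow i hi, hs1 i]
    · simp only [hi, if_false, sub_zero]; exact mul_le_mul_of_nonneg_left (hhigh i hi) (hs0 i)
  have := hbalance ▸ sum_le_sum fun i _ => hterm i
  simpa [sub_mul, sum_sub_distrib, ite_mul, sum_ite_mem] using this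

theorem Fin.card_filter_sub_le_val {n m : ℕ} (hmn : m ≤ n) :
    #{i : Fin n | n - m ≤ (i : ℕ)} = m := by
  have h := card_filter_add_card_filter_not (s := univ) fun i : Fin n => (i : ℕ) < n - m
  simp only [not_lt, Fin.card_filter_val_lt, card_univ, Fintype.card_fin] at h
  omega

theorem sum_filter_sub_le_sum_mul {n m : ℕ} (hm1 : 1 ≤ m) (hmn : m ≤ n) {μ s : Fin n → ℝ}
    (hμ : Antitone μ) (hs0 : ∀ i, 0 ≤ s i) (hs1 : ∀ i, s i ≤ 1) (hsum : ∑ i, s i = m) :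
    ∑ i ∈ {i : Fin n | n - m ≤ (i : ℕ)}, μ i ≤ ∑ i, s i * μ i := by
  refine sum_le_sum_mul_of_le_pivot (c := μ ⟨n - m, by omega⟩) (fun i hi => hμ ?_)
    (fun i hi => hμ ?_) hs0 hs1 (by rw [hsum, Fin.card_filter_sub_le_val hmn])
  · simpa [Fin.le_def] using hi
  · simp only [mem_filter, mem_univ, true_and, not_le] at hi
    exact Fin.le_def.mpr hi.le

theorem sum_norm_sq_row_of_mem_unitaryGroup {𝕜 n : Type*} [RCLike 𝕜] [Fintype n] [DecidableEq n]
    {U : Matrix n n 𝕜} (hU : U ∈ unitaryGroup n 𝕜) (i : n) : ∑ j, ‖U i j‖ ^ 2 = 1 := by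
  have h := congrFun (congrFun (mem_unitaryGroup_iff.mp hU) i) i
  simp only [mul_apply, star_apply, ← starRingEnd_apply, RCLike.mul_conj, one_apply_eq] at h
  exact_mod_cast h

theorem sum_norm_sq_col_of_mem_unitaryGroup {𝕜 n : Type*} [RCLike 𝕜] [Fintype n] [DecidableEq n]
    {U : Matrix n n 𝕜} (hU : U ∈ unitaryGroup n 𝕜) (j : n) : ∑ i, ‖U i j‖ ^ 2 = 1 := by
  simpa using sum_norm_sq_row_of_mem_unitaryGroup (Unitary.star_mem hU) j

section Trace

variable {𝕜 ι : Type*} [RCLike 𝕜] [Fintype ι]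

theorem trace_conj_mul_conj (U U' D E : Matrix ι ι 𝕜) :
    trace (U * D * Uᴴ * (U' * E * U'ᴴ)) = trace (D * (Uᴴ * U') * E * (Uᴴ * U')ᴴ) := by
  rw [conjTranspose_mul, conjTranspose_conjTranspose,
    show U * D * Uᴴ * (U' * E * U'ᴴ) = U * (D * Uᴴ * U' * E * U'ᴴ) by simp only [mul_assoc],
    trace_mul_comm]
  simp only [mul_assoc]

variable [DecidableEq ι]

theorem trace_diagonal_mul_mul_diagonal_mul_conjTranspose (Z : Matrix ι ι 𝕜) (d μ : ι → ℝ) :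
    trace (diagonal (RCLike.ofReal ∘ d) * Z * diagonal (RCLike.ofReal ∘ μ) * Zᴴ)
      = ((∑ k, (∑ l, d l * ‖Z l k‖ ^ 2) * μ k : ℝ) : 𝕜) := by
  simp only [trace, Matrix.diag, mul_apply (M := diagonal _ * Z * diagonal _), mul_diagonal,
    diagonal_mul, conjTranspose_apply, Function.comp_apply]
  push_cast
  simp only [sum_mul]
  rw [sum_comm]
  refine sum_congr rfl fun l _ => sum_congr rfl fun k _ => ?_
  rw [← RCLike.mul_conj]
  simp only [starRingEnd_apply]
  ring

theorem trace_conj_mul_conj_self {U : Matrix ι ι 𝕜} (hU : U ∈ unitaryGroup ι 𝕜) (d μ : ι → ℝ) :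
    trace (U * diagonal (RCLike.ofReal ∘ d) * Uᴴ * (U * diagonal (RCLike.ofReal ∘ μ) * Uᴴ))
      = ((∑ k, d k * μ k : ℝ) : 𝕜) := by
  rw [trace_conj_mul_conj, ← star_eq_conjTranspose, mem_unitaryGroup_iff'.mp hU, mul_one,
    conjTranspose_one, mul_one, diagonal_mul_diagonal, trace_diagonal]
  push_cast
  rfl

end Trace

section Hoffman

variable {𝕜 : Type*} [RCLike 𝕜] {n m : ℕ}

theorem sum_filter_sub_le_re_trace (hm1 : 1 ≤ m) (hmn : m ≤ n) {μ d : Fin n → ℝ} (hμ : Antitone μ)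
    (hd0 : ∀ i, 0 ≤ d i) (hd1 : ∀ i, d i ≤ 1) (hdsum : ∑ i, d i = m)
    {U U' : Matrix (Fin n) (Fin n) 𝕜} (hU : U ∈ unitaryGroup (Fin n) 𝕜)
    (hU' : U' ∈ unitaryGroup (Fin n) 𝕜) :
    ∑ i ∈ {i : Fin n | n - m ≤ (i : ℕ)}, μ i ≤ RCLike.re (trace
      (U * diagonal (RCLike.ofReal ∘ d) * Uᴴ * (U' * diagonal (RCLike.ofReal ∘ μ) * U'ᴴ))) := by
  have hZ : Uᴴ * U' ∈ unitaryGroup (Fin n) 𝕜 := mul_mem (Unitary.star_mem hU) hU'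
  rw [trace_conj_mul_conj, trace_diagonal_mul_mul_diagonal_mul_conjTranspose, RCLike.ofReal_re]
  refine sum_filter_sub_le_sum_mul hm1 hmn hμ (fun k => ?_) (fun k => ?_) ?_
  · exact sum_nonneg fun l _ => mul_nonneg (hd0 l) (sq_nonneg _)
  · calc ∑ l, d l * ‖(Uᴴ * U') l k‖ ^ 2 ≤ ∑ l, ‖(Uᴴ * U') l k‖ ^ 2 :=
          sum_le_sum fun l _ => mul_le_of_le_one_left (sq_nonneg _) (hd1 l)
      _ = 1 := sum_norm_sq_col_of_mem_unitaryGroup hZ k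
  · rw [sum_comm, ← hdsum]
    simp only [← mul_sum, sum_norm_sq_row_of_mem_unitaryGroup hZ, mul_one]

theorem sum_filter_lt_le_card_mul_neg_sum_filter_sub (hm1 : 1 ≤ m) (hmn : m ≤ n)
    {μ : Fin n → ℝ} (hμ : Antitone μ) {U A : Matrix (Fin n) (Fin n) 𝕜}
    (hU : U ∈ unitaryGroup (Fin n) 𝕜) (hA : A = U * diagonal (RCLike.ofReal ∘ μ) * Uᴴ)
    {ι : Type*} (s : Finset ι) (W : ι → Matrix (Fin n) (Fin n) 𝕜)
    (hW : ∀ j ∈ s, W j ∈ unitaryGroup (Fin n) 𝕜) (hsum : A + ∑ j ∈ s, W j * A * (W j)ᴴ = 0) :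
    ∑ i ∈ {i : Fin n | (i : ℕ) < m}, μ i ≤ #s * ∑ i ∈ {i : Fin n | n - m ≤ (i : ℕ)}, -μ i := by
  set d : Fin n → ℝ := fun i => if (i : ℕ) < m then 1 else 0
  set P := U * diagonal (RCLike.ofReal ∘ d) * Uᴴ
  have htop : RCLike.re (trace (P * A)) = ∑ i ∈ {i : Fin n | (i : ℕ) < m}, μ i := by
    rw [hA, trace_conj_mul_conj_self hU, RCLike.ofReal_re, sum_filter]
    simp [d, ite_mul]
  have hbottom : ∀ j ∈ s, ∑ i ∈ {i : Fin n | n - m ≤ (i : ℕ)}, μ i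
      ≤ RCLike.re (trace (P * (W j * A * (W j)ᴴ))) := by
    intro j hj
    have hconj : W j * A * (W j)ᴴ = W j * U * diagonal (RCLike.ofReal ∘ μ) * (W j * U)ᴴ := by
      rw [hA, conjTranspose_mul]; simp only [mul_assoc]
    rw [hconj]
    refine sum_filter_sub_le_re_trace hm1 hmn hμ (fun i => ?_) (fun i => ?_) ?_ hU
      (mul_mem (hW j hj) hU)
    · positivity
    · simp only [d]; split_ifs <;> norm_num
    · simp [d, sum_boole, Fin.card_filter_val_lt, hmn]
  have hzero : RCLike.re (trace (P * A)) + ∑ j ∈ s, RCLike.re (trace (P * (W j * A * (W j)ᴴ)))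
      = 0 := by
    simpa [mul_add, mul_sum, trace_sum] using congrArg (fun B => RCLike.re (trace (P * B))) hsum
  have hbound := card_nsmul_le_sum s _ _ hbottom
  rw [nsmul_eq_mul] at hbound
  rw [sum_neg_distrib]
  linarith

end Hoffman

section Coloring

variable {K V : Type*} [Field K] [StarRing K] [Fintype V] [DecidableEq V]

theorem diagonal_mem_unitaryGroup {d : V → K} (hd : ∀ v, d v ∈ unitary K) :
    diagonal d ∈ unitaryGroup V K := by
  rw [mem_unitaryGroup_iff', star_eq_conjTranspose, diagonal_conjTranspose, diagonal_mul_diagonal,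
    ← diagonal_one]
  exact congrArg diagonal (funext fun v => Unitary.star_mul_self_of_mem (hd v))

theorem sum_pow_mul_mul_conjTranspose_pow_eq_zero {k : ℕ} {ζ : K} (hζ : IsPrimitiveRoot ζ k)
    (hζu : ζ ∈ unitary K) (c : V → Fin k) {M : Matrix V V K}
    (hM : ∀ u v, c u = c v → M u v = 0) :
    ∑ j ∈ range k,
        diagonal (fun v => ζ ^ (c v : ℕ)) ^ j * M * (diagonal (fun v => ζ ^ (c v : ℕ)) ^ j)ᴴ = 0 := by
  ext u v
  simp only [Matrix.sum_apply, diagonal_pow, diagonal_conjTranspose, mul_diagonal, diagonal_mul,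
    Pi.pow_apply, Pi.star_apply, Matrix.zero_apply]
  by_cases huv : c u = c v
  · simp [hM u v huv]
  have hstar : star ζ = ζ⁻¹ := eq_inv_of_mul_eq_one_left (Unitary.star_mul_self_of_mem hζu)
  have hζ0 : ζ ≠ 0 := fun h => by simpa [h] using Unitary.star_mul_self_of_mem hζu
  set z := ζ ^ (c u : ℕ) / ζ ^ (c v : ℕ)
  have hz1 : z ≠ 1 := fun h =>
    huv (Fin.ext (hζ.pow_inj (c u).isLt (c v).isLt (div_eq_one_iff_eq (pow_ne_zero _ hζ0) |>.mp h)))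
  have hzk : z ^ k = 1 := by
    rw [div_pow, ← pow_mul, ← pow_mul, mul_comm, pow_mul, hζ.pow_eq_one, mul_comm, pow_mul,
      hζ.pow_eq_one, one_pow, one_pow, div_one]
  have hterm : ∀ j, (ζ ^ (c u : ℕ)) ^ j * M u v * star ((ζ ^ (c v : ℕ)) ^ j) = M u v * z ^ j := by
    intro j
    rw [star_pow, star_pow, hstar, div_pow]
    ring
  rw [sum_congr rfl fun j _ => hterm j, ← mul_sum, geom_sum_eq hz1, hzk, sub_self, zero_div,
    mul_zero]

end Coloring

theorem SimpleGraph.map_adjMatrix {V R S : Type*} (G : SimpleGraph V) [DecidableRel G.Adj]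
    [Zero R] [One R] [Zero S] [One S] (f : R → S) (h₀ : f 0 = 0) (h₁ : f 1 = 1) :
    (G.adjMatrix R).map f = G.adjMatrix S := by
  ext u v
  by_cases huv : G.Adj u v <;> simp [huv, h₀, h₁]

theorem stmt_8_general {n : ℕ} (G : SimpleGraph (Fin n)) [DecidableRel G.Adj]
    (χ : ℕ) (hχ : G.chromaticNumber = (χ : ℕ∞))
    (hA : (G.adjMatrix ℝ).IsHermitian)
    (μ : Fin n → ℝ) (hμa : Antitone μ)
    (hμ : ∃ e : Equiv.Perm (Fin n), μ = hA.eigenvalues ∘ e)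
    (m : ℕ) (hm1 : 1 ≤ m) (hmn : m ≤ n) :
    (∑ i ∈ Finset.univ.filter (fun i : Fin n => (i : ℕ) < m), μ i) ≤
      ((χ : ℝ) - 1) * (∑ i ∈ Finset.univ.filter (fun i : Fin n => n - m ≤ (i : ℕ)), -μ i) ∧
    (0 < (∑ i ∈ Finset.univ.filter (fun i : Fin n => n - m ≤ (i : ℕ)), -μ i) →
      (χ : ℝ) ≥ 1 + (∑ i ∈ Finset.univ.filter (fun i : Fin n => (i : ℕ) < m), μ i) /
        (∑ i ∈ Finset.univ.filter (fun i : Fin n => n - m ≤ (i : ℕ)), -μ i)) := by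
  obtain ⟨e, rfl⟩ := hμ
  obtain ⟨c⟩ : G.Colorable χ := SimpleGraph.chromaticNumber_le_iff_colorable.mp hχ.le
  obtain ⟨k, rfl⟩ : ∃ k, χ = k + 1 := Nat.exists_eq_add_one.mpr (c ⟨0, by omega⟩).pos
  obtain ⟨U, hU, hspec⟩ := hA.exists_unitary_map_algebraMap_eq (𝕜 := ℂ) e
  have hζ := Complex.isPrimitiveRoot_exp (k + 1) k.succ_ne_zero
  have hζu : Complex.exp (2 * Real.pi * Complex.I / (k + 1 : ℕ)) ∈ unitary ℂ := by
    rw [Unitary.mem_iff_star_mul_self, Complex.star_def, Complex.conj_mul',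
      hζ.norm'_eq_one k.succ_ne_zero]
    simp
  set D := diagonal fun v => Complex.exp (2 * Real.pi * Complex.I / (k + 1 : ℕ)) ^ (c v : ℕ)
  have hD : D ∈ unitaryGroup (Fin n) ℂ := diagonal_mem_unitaryGroup fun v => pow_mem hζu _
  have hcancel := sum_pow_mul_mul_conjTranspose_pow_eq_zero hζ hζu c (M := G.adjMatrix ℂ)
    fun u v huv => by simp [show ¬G.Adj u v from fun h => c.valid h huv]
  rw [sum_range_succ', pow_zero, one_mul, conjTranspose_one, mul_one, add_comm] at hcancel
  have hbound := sum_filter_lt_le_card_mul_neg_sum_filter_sub hm1 hmn hμa hU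
    (by rw [← G.map_adjMatrix _ (map_zero (algebraMap ℝ ℂ)) (map_one _), hspec]) (range k)
    (fun j => D ^ (j + 1)) (fun j _ => pow_mem hD _) hcancel
  rw [card_range] at hbound
  push_cast
  refine ⟨by linarith, fun hpos => ?_⟩
  linarith [(div_le_iff₀ hpos).mpr hbound]

/-- **Generalized Hoffman bound.** For a finite simple graph `G` on `n` vertices with at least
one edge and chromatic number `χ`, for every `1 ≤ m ≤ n`:
`Σ_{i=1}^m μ_i ≤ (χ - 1)·Σ_{i=1}^m (-μ_{n+1-i})`, and whenever `Σ_{i=1}^m (-μ_{n+1-i}) > 0`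
one has `χ ≥ 1 + (Σ_{i=1}^m μ_i)/(Σ_{i=1}^m (-μ_{n+1-i}))`.
Here `μ` is the non-increasing enumeration of the adjacency eigenvalues; the top `m`
eigenvalues are those with index `< m` and the bottom `m` are those with index `≥ n - m`. -/
theorem stmt_8 {n : ℕ} (hn : 0 < n) (G : SimpleGraph (Fin n)) [DecidableRel G.Adj]
    (he : ∃ v w : Fin n, G.Adj v w)
    (χ : ℕ) (hχ : G.chromaticNumber = (χ : ℕ∞))
    (hA : (G.adjMatrix ℝ).IsHermitian)
    (μ : Fin n → ℝ) (hμa : Antitone μ)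
    (hμ : ∃ e : Equiv.Perm (Fin n), μ = hA.eigenvalues ∘ e)
    (m : ℕ) (hm1 : 1 ≤ m) (hmn : m ≤ n) :
    (∑ i ∈ Finset.univ.filter (fun i : Fin n => (i : ℕ) < m), μ i) ≤
      ((χ : ℝ) - 1) * (∑ i ∈ Finset.univ.filter (fun i : Fin n => n - m ≤ (i : ℕ)), -μ i) ∧
    (0 < (∑ i ∈ Finset.univ.filter (fun i : Fin n => n - m ≤ (i : ℕ)), -μ i) →
      (χ : ℝ) ≥ 1 + (∑ i ∈ Finset.univ.filter (fun i : Fin n => (i : ℕ) < m), μ i) /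
        (∑ i ∈ Finset.univ.filter (fun i : Fin n => n - m ≤ (i : ℕ)), -μ i)) :=
  stmt_8_general G χ hχ hA μ hμa hμ m hm1 hmn
end

section
/- (First generalized Kolotilina bound.) Let G be a finite simple graph on n vertices with at least one edge and chromatic number χ. Then for every m with 1 ≤ m ≤ n: Σ_{i=1}^m μ_i ≤ (χ − 1)·Σ_{i=1}^m (μ_i − δ_i + θ_i). -/
/-!
By Ky Fan's principle, the sum of the `m` largest eigenvalues of a Hermitian matrix `M` is the
maximum of `re tr (M X)` over the matrices `0 ≤ X ≤ 1` with `tr X = m`.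

Write `(χ - 1) Q = (χ D - L) + (χ - 2) A`. A proper colouring `c` with `χ` colours and a
primitive `χ`-th root of unity `ω` give the diagonal unitary `W = diag (ω ^ c v)`; averaging
`W ^ j * L * (W ^ j)ᴴ` over `j < χ` kills the entries between different colour classes and leaves
`D`, so `χ D - L = ∑_{0 < j < χ} W ^ j * L * (W ^ j)ᴴ`. Testing both sides against an `X` that is
optimal for `Q` gives `(χ - 1) ∑ δ ≤ (χ - 1) ∑ θ + (χ - 2) ∑ μ`, which rearranges to the claim.
-/

open Finset Matrix
open scoped ComplexOrder

theorem sum_mul_le_sum_of_top {ι : Type*} [Fintype ι] [DecidableEq ι] {lam t : ι → ℝ}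
    {S : Finset ι} (hS : ∀ i ∈ S, ∀ j ∉ S, lam j ≤ lam i) (ht0 : ∀ i, 0 ≤ t i)
    (ht1 : ∀ i, t i ≤ 1) (hts : ∑ i, t i = #S) :
    ∑ i, lam i * t i ≤ ∑ i ∈ S, lam i := by
  rcases S.eq_empty_or_nonempty with rfl | hne
  · have ht : ∀ i, t i = 0 := fun i =>
      (Finset.sum_eq_zero_iff_of_nonneg fun j _ => ht0 j).1 (by simpa using hts) i (mem_univ i)
    simp [ht]
  obtain ⟨i₀, hi₀, hmin⟩ := S.exists_min_image lam hne
  have hcompl : ∑ j ∈ Sᶜ, t j = ∑ i ∈ S, (1 - t i) := by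
    rw [sum_sub_distrib, sum_const, nsmul_one, ← hts, ← S.sum_add_sum_compl t]
    ring
  calc ∑ i, lam i * t i = ∑ i ∈ S, lam i * t i + ∑ j ∈ Sᶜ, lam j * t j :=
        (S.sum_add_sum_compl _).symm
    _ ≤ ∑ i ∈ S, lam i * t i + ∑ j ∈ Sᶜ, lam i₀ * t j := by
        gcongr with j hj
        · exact ht0 j
        · exact hS i₀ hi₀ j (mem_compl.1 hj)
    _ = ∑ i ∈ S, lam i * t i + ∑ i ∈ S, lam i₀ * (1 - t i) := by
        rw [← mul_sum, ← mul_sum, hcompl]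
    _ ≤ ∑ i ∈ S, lam i * t i + ∑ i ∈ S, lam i * (1 - t i) := by
        gcongr with i hi
        · linarith [ht1 i]
        · exact hmin i hi
    _ = ∑ i ∈ S, lam i := by rw [← sum_add_distrib]; simp only [← mul_add, add_sub_cancel, mul_one]

theorem Matrix.trace_mul_mul_mul_cycle {ι R : Type*} [Fintype ι] [CommSemiring R]
    (A B C D : Matrix ι ι R) : (A * B * C * D).trace = (B * (C * D * A)).trace := by
  rw [Matrix.mul_assoc, trace_mul_comm, ← Matrix.mul_assoc, ← Matrix.mul_assoc, trace_mul_comm]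
  simp only [Matrix.mul_assoc]

variable {ι 𝕜 : Type*} [Fintype ι] [DecidableEq ι] [RCLike 𝕜]

/-- The convex hull of the rank-`m` orthogonal projections. -/
def IsFractionalProjection (m : ℕ) (X : Matrix ι ι 𝕜) : Prop :=
  X.PosSemidef ∧ (1 - X).PosSemidef ∧ X.trace = m

namespace IsFractionalProjection

variable {m : ℕ} {X U : Matrix ι ι 𝕜}

theorem conjTranspose_mul_mul (hX : IsFractionalProjection m X) (hU : U ∈ unitaryGroup ι 𝕜) :
    IsFractionalProjection m (Uᴴ * X * U) := by
  obtain ⟨hX0, hX1, hXt⟩ := hX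
  refine ⟨hX0.conjTranspose_mul_mul_same U, ?_, ?_⟩
  · have h : 1 - Uᴴ * X * U = Uᴴ * (1 - X) * U := by
      rw [Matrix.mul_sub, Matrix.sub_mul, Matrix.mul_one, ← star_eq_conjTranspose,
        Unitary.star_mul_self_of_mem hU]
    rw [h]
    exact hX1.conjTranspose_mul_mul_same U
  · rw [trace_mul_cycle, ← star_eq_conjTranspose, Unitary.mul_star_self_of_mem hU, one_mul, hXt]

theorem re_trace_diagonal_mul_le (hX : IsFractionalProjection m X) {lam : ι → ℝ}
    {S : Finset ι} (hS : ∀ i ∈ S, ∀ j ∉ S, lam j ≤ lam i) (hcard : #S = m) :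
    RCLike.re (diagonal (RCLike.ofReal ∘ lam) * X).trace ≤ ∑ i ∈ S, lam i := by
  obtain ⟨hX0, hX1, hXt⟩ := hX
  have hre : RCLike.re (diagonal (RCLike.ofReal ∘ lam) * X).trace =
      ∑ i, lam i * RCLike.re (X i i) := by
    simp [trace, diagonal_mul]
  rw [hre]
  refine sum_mul_le_sum_of_top hS (fun i => ?_) (fun i => ?_) ?_
  · exact (RCLike.nonneg_iff.1 hX0.diag_nonneg).1
  · simpa using (RCLike.nonneg_iff.1 (hX1.diag_nonneg (i := i))).1
  · simpa [trace, hcard] using congrArg RCLike.re hXt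

theorem re_trace_conj_diagonal_mul_le (hX : IsFractionalProjection m X)
    (hU : U ∈ unitaryGroup ι 𝕜) {lam : ι → ℝ} {S : Finset ι}
    (hS : ∀ i ∈ S, ∀ j ∉ S, lam j ≤ lam i) (hcard : #S = m) :
    RCLike.re (U * diagonal (RCLike.ofReal ∘ lam) * Uᴴ * X).trace ≤ ∑ i ∈ S, lam i := by
  rw [trace_mul_mul_mul_cycle]
  exact (hX.conjTranspose_mul_mul hU).re_trace_diagonal_mul_le hS hcard

end IsFractionalProjection

theorem trace_mul_mul_conjTranspose_of_mem_unitaryGroup {U : Matrix ι ι 𝕜}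
    (hU : U ∈ unitaryGroup ι 𝕜) (A : Matrix ι ι 𝕜) : (U * A * Uᴴ).trace = A.trace := by
  rw [trace_mul_cycle, ← star_eq_conjTranspose, Unitary.star_mul_self_of_mem hU, Matrix.one_mul]

theorem exists_isFractionalProjection_re_trace_conj_diagonal_mul_eq {U : Matrix ι ι 𝕜}
    (hU : U ∈ unitaryGroup ι 𝕜) (lam : ι → ℝ) (S : Finset ι) :
    ∃ X, IsFractionalProjection #S X ∧
      RCLike.re (U * diagonal (RCLike.ofReal ∘ lam) * Uᴴ * X).trace = ∑ i ∈ S, lam i := by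
  set p : ι → 𝕜 := fun i => if i ∈ S then 1 else 0
  have hUU : Uᴴ * U = 1 := Unitary.star_mul_self_of_mem hU
  have hp : ∀ i, 0 ≤ p i ∧ 0 ≤ 1 - p i := fun i => by by_cases hi : i ∈ S <;> simp [p, hi]
  refine ⟨U * diagonal p * Uᴴ, ⟨?_, ?_, ?_⟩, ?_⟩
  · exact (PosSemidef.diagonal fun i => (hp i).1).mul_mul_conjTranspose_same U
  · have h : 1 - U * diagonal p * Uᴴ = U * diagonal (1 - p) * Uᴴ := by
      rw [show diagonal (1 - p) = 1 - diagonal p by rw [← diagonal_one, diagonal_sub]; rfl,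
        Matrix.mul_sub, Matrix.sub_mul, Matrix.mul_one,
        ← star_eq_conjTranspose, Unitary.mul_star_self_of_mem hU]
    rw [h]
    exact (PosSemidef.diagonal fun i => (hp i).2).mul_mul_conjTranspose_same U
  · rw [trace_mul_mul_conjTranspose_of_mem_unitaryGroup hU, trace_diagonal]
    simp [p]
  · have h : U * diagonal (RCLike.ofReal ∘ lam) * Uᴴ * (U * diagonal p * Uᴴ) =
        U * diagonal ((RCLike.ofReal ∘ lam) * p) * Uᴴ := by
      simp only [Matrix.mul_assoc]
      rw [← Matrix.mul_assoc Uᴴ U, hUU, Matrix.one_mul, ← Matrix.mul_assoc (diagonal _),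
        diagonal_mul_diagonal']
      rfl
    rw [h, trace_mul_mul_conjTranspose_of_mem_unitaryGroup hU, trace_diagonal]
    simp [p]

theorem Matrix.IsHermitian.exists_map_algebraMap_eq {M : Matrix ι ι ℝ} (hM : M.IsHermitian) :
    ∃ V ∈ unitaryGroup ι 𝕜,
      M.map (algebraMap ℝ 𝕜) = V * diagonal (RCLike.ofReal ∘ hM.eigenvalues) * Vᴴ := by
  set U : Matrix ι ι ℝ := (hM.eigenvectorUnitary : Matrix ι ι ℝ)
  have hmap_conjTranspose (A : Matrix ι ι ℝ) :
      (A.map (algebraMap ℝ 𝕜))ᴴ = Aᴴ.map (algebraMap ℝ 𝕜) :=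
    (conjTranspose_map _ fun x => (RCLike.conj_ofReal x).symm).symm
  refine ⟨U.map (algebraMap ℝ 𝕜), ?_, ?_⟩
  · rw [mem_unitaryGroup_iff, star_eq_conjTranspose, hmap_conjTranspose, ← Matrix.map_mul,
      ← star_eq_conjTranspose, Unitary.mul_star_self_of_mem hM.eigenvectorUnitary.2,
      Matrix.map_one _ (map_zero _) (map_one _)]
  · conv_lhs => rw [hM.spectral_theorem, Unitary.conjStarAlgAut_apply]
    rw [Matrix.map_mul, Matrix.map_mul, hmap_conjTranspose, diagonal_map (map_zero _)]
    rfl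

theorem exists_finset_top_of_antitone {n m : ℕ} (hmn : m ≤ n) {f lam : Fin n → ℝ}
    (hf : Antitone f) {e : Equiv.Perm (Fin n)} (hfe : f = lam ∘ e) :
    ∃ S : Finset (Fin n), #S = m ∧ (∀ i ∈ S, ∀ j ∉ S, lam j ≤ lam i) ∧
      ∑ i ∈ S, lam i = ∑ i ∈ univ.filter (fun i : Fin n => (i : ℕ) < m), f i := by
  refine ⟨(univ.filter fun i : Fin n => (i : ℕ) < m).map e.toEmbedding, ?_, ?_, ?_⟩
  · rw [card_map, Fin.card_filter_val_lt, min_eq_right hmn]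
  · intro i hi j hj
    simp only [mem_map_equiv, mem_filter, mem_univ, true_and, not_lt] at hi hj
    have hlam : lam = f ∘ e.symm := by rw [hfe]; ext; simp
    rw [hlam]
    exact hf (Fin.le_def.2 (by omega))
  · rw [sum_map, hfe]
    rfl

theorem Matrix.IsHermitian.isGreatest_re_trace_map_mul {n m : ℕ} {M : Matrix (Fin n) (Fin n) ℝ}
    (hM : M.IsHermitian) {f : Fin n → ℝ} (hf : Antitone f)
    (hfe : ∃ e : Equiv.Perm (Fin n), f = hM.eigenvalues ∘ e) (hmn : m ≤ n) :
    IsGreatest ((fun X => RCLike.re (M.map (algebraMap ℝ 𝕜) * X).trace) ''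
        {X | IsFractionalProjection m X})
      (∑ i ∈ univ.filter (fun i : Fin n => (i : ℕ) < m), f i) := by
  obtain ⟨e, hfe⟩ := hfe
  obtain ⟨V, hV, hMV⟩ := hM.exists_map_algebraMap_eq (𝕜 := 𝕜)
  obtain ⟨S, hcard, hS, hsum⟩ := exists_finset_top_of_antitone hmn hf hfe
  rw [hMV, ← hsum]
  constructor
  · obtain ⟨X, hX, hXeq⟩ :=
      exists_isFractionalProjection_re_trace_conj_diagonal_mul_eq hV hM.eigenvalues S
    exact ⟨X, hcard ▸ hX, hXeq⟩
  · rintro _ ⟨X, hX, rfl⟩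
    exact hX.re_trace_conj_diagonal_mul_le hV hS hcard

theorem Matrix.diagonal_mem_unitaryGroup {d : ι → 𝕜} (hd : ∀ i, ‖d i‖ = 1) :
    diagonal d ∈ unitaryGroup ι 𝕜 := by
  rw [mem_unitaryGroup_iff, star_eq_conjTranspose, diagonal_conjTranspose, diagonal_mul_diagonal,
    ← diagonal_one]
  congr 1
  ext i
  simp [RCLike.mul_conj, hd]

theorem IsPrimitiveRoot.geom_sum_pow_mul_inv_pow {K : Type*} [Field K] {ω : K} {k : ℕ}
    (hω : IsPrimitiveRoot ω k) (a b : Fin k) :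
    ∑ j ∈ range k, (ω ^ (a : ℕ) * (ω ^ (b : ℕ))⁻¹) ^ j = if a = b then (k : K) else 0 := by
  have hω0 : ω ≠ 0 := hω.ne_zero (a.pos.ne')
  split_ifs with hab
  · simp [hab, hω0]
  · have hne : ω ^ (a : ℕ) * (ω ^ (b : ℕ))⁻¹ ≠ 1 := by
      rw [Ne, mul_inv_eq_one₀ (pow_ne_zero _ hω0)]
      exact fun h => hab (Fin.ext (hω.pow_inj a.isLt b.isLt h))
    rw [geom_sum_eq hne, mul_pow, inv_pow, ← pow_mul, ← pow_mul, mul_comm (a : ℕ),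
      mul_comm (b : ℕ), pow_mul, pow_mul, hω.pow_eq_one]
    simp

theorem IsPrimitiveRoot.sum_pow_diagonal_mul_mul_conjTranspose {ω : ℂ} {k : ℕ}
    (hω : IsPrimitiveRoot ω k) (c : ι → Fin k) (M : Matrix ι ι ℂ) :
    ∑ j ∈ range k, (diagonal fun v => ω ^ (c v : ℕ)) ^ j * M *
        ((diagonal fun v => ω ^ (c v : ℕ)) ^ j)ᴴ =
      (k : ℂ) • Matrix.of fun v u => if c v = c u then M v u else 0 := by
  ext v u
  have hnorm : ‖ω‖ = 1 := hω.norm'_eq_one (c v).pos.ne'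
  have hterm (j : ℕ) : (ω ^ (c v : ℕ)) ^ j * M v u * star ((ω ^ (c u : ℕ)) ^ j) =
      M v u * (ω ^ (c v : ℕ) * (ω ^ (c u : ℕ))⁻¹) ^ j := by
    rw [show star ((ω ^ (c u : ℕ)) ^ j) = _ from (Complex.inv_eq_conj (by simp [hnorm])).symm]
    ring
  simp only [Matrix.sum_apply, diagonal_pow, diagonal_conjTranspose, mul_diagonal, diagonal_mul,
    Pi.pow_apply, Pi.star_apply, hterm, ← mul_sum, hω.geom_sum_pow_mul_inv_pow, Matrix.smul_apply,
    of_apply, smul_eq_mul]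
  split_ifs <;> ring

namespace SimpleGraph

variable {V : Type*} {G : SimpleGraph V} [DecidableRel G.Adj]

theorem map_adjMatrix_s10 {R S : Type*} [NonAssocSemiring R] [NonAssocSemiring S] (f : R →+* S) :
    (G.adjMatrix R).map f = G.adjMatrix S := by
  ext v u
  by_cases h : G.Adj v u <;> simp [h]

variable [Fintype V] [DecidableEq V]

theorem map_degMatrix {R S : Type*} [NonAssocSemiring R] [NonAssocSemiring S] (f : R →+* S) :
    (G.degMatrix R).map f = G.degMatrix S := by
  simp [degMatrix, diagonal_map]

theorem map_lapMatrix {R S : Type*} [Ring R] [Ring S] (f : R →+* S) :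
    (G.lapMatrix R).map f = G.lapMatrix S := by
  rw [lapMatrix, lapMatrix, ← map_degMatrix f, ← map_adjMatrix_s10 f]
  exact Matrix.map_sub _ (map_sub f) _ _

theorem Coloring.of_ite_lapMatrix_eq_degMatrix {α R : Type*} [Ring R] [DecidableEq α]
    (c : G.Coloring α) :
    (Matrix.of fun v u => if c v = c u then G.lapMatrix R v u else 0) = G.degMatrix R := by
  ext v u
  by_cases hvu : v = u
  · simp [hvu, lapMatrix]
  · have hnadj : c v = c u → ¬G.Adj v u := fun h hadj => c.valid hadj h
    by_cases hc : c v = c u <;> simp [hc, hvu, hnadj, lapMatrix, degMatrix]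

theorem Coloring.re_trace_smul_degMatrix_sub_lapMatrix_mul_le {k m : ℕ}
    (c : G.Coloring (Fin (k + 1))) {X : Matrix V V ℂ} (hX : IsFractionalProjection m X) {s : ℝ}
    (hs : ∀ Y, IsFractionalProjection m Y → RCLike.re (G.lapMatrix ℂ * Y).trace ≤ s) :
    RCLike.re ((((k + 1 : ℕ) : ℂ) • G.degMatrix ℂ - G.lapMatrix ℂ) * X).trace ≤ k * s := by
  obtain ⟨ω, hω⟩ : ∃ ω : ℂ, IsPrimitiveRoot ω (k + 1) :=
    ⟨_, Complex.isPrimitiveRoot_exp (k + 1) k.succ_ne_zero⟩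
  set W : Matrix V V ℂ := diagonal fun v => ω ^ (c v : ℕ)
  have hW : W ∈ unitaryGroup V ℂ :=
    diagonal_mem_unitaryGroup fun v => by simp [hω.norm'_eq_one k.succ_ne_zero]
  have hsum : ((k + 1 : ℕ) : ℂ) • G.degMatrix ℂ - G.lapMatrix ℂ =
      ∑ j ∈ range k, W ^ (j + 1) * G.lapMatrix ℂ * (W ^ (j + 1))ᴴ := by
    rw [← c.of_ite_lapMatrix_eq_degMatrix, ← hω.sum_pow_diagonal_mul_mul_conjTranspose,
      sum_range_succ']
    simp only [pow_zero, Matrix.one_mul, Matrix.mul_one, conjTranspose_one, add_sub_cancel_right]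
    rfl
  calc RCLike.re ((((k + 1 : ℕ) : ℂ) • G.degMatrix ℂ - G.lapMatrix ℂ) * X).trace
      = ∑ j ∈ range k, RCLike.re (G.lapMatrix ℂ * ((W ^ (j + 1))ᴴ * X * W ^ (j + 1))).trace := by
        simp only [hsum, Matrix.sum_mul, trace_sum, map_sum, trace_mul_mul_mul_cycle]
    _ ≤ ∑ j ∈ range k, s :=
        sum_le_sum fun j _ => hs _ (hX.conjTranspose_mul_mul (pow_mem hW _))
    _ = k * s := by simp

theorem natCast_mul_re_trace_degMatrix_add_adjMatrix_mul (k : ℕ) (P : Matrix V V ℂ) :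
    k * RCLike.re ((G.degMatrix ℂ + G.adjMatrix ℂ) * P).trace =
      RCLike.re ((((k + 1 : ℕ) : ℂ) • G.degMatrix ℂ - G.lapMatrix ℂ) * P).trace +
        (k - 1) * RCLike.re (G.adjMatrix ℂ * P).trace := by
  have hsplit : (k : ℝ) • (G.degMatrix ℂ + G.adjMatrix ℂ) =
      ((k + 1 : ℕ) : ℂ) • G.degMatrix ℂ - G.lapMatrix ℂ + ((k : ℝ) - 1) • G.adjMatrix ℂ := by
    rw [lapMatrix]
    push_cast
    module
  rw [← RCLike.smul_re, ← trace_smul, ← Matrix.smul_mul, hsplit, Matrix.add_mul, trace_add,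
    map_add, Matrix.smul_mul, trace_smul, RCLike.smul_re]

end SimpleGraph

theorem stmt_10_general {n : ℕ} (G : SimpleGraph (Fin n)) [DecidableRel G.Adj]
    (he : ∃ v w : Fin n, G.Adj v w)
    (χ : ℕ) (hχ : G.chromaticNumber = (χ : ℕ∞))
    (hA : (G.adjMatrix ℝ).IsHermitian)
    (hL : (G.lapMatrix ℝ).IsHermitian)
    (hQ : (G.degMatrix ℝ + G.adjMatrix ℝ).IsHermitian)
    (μ θ δ : Fin n → ℝ)
    (hμa : Antitone μ) (hμ : ∃ e : Equiv.Perm (Fin n), μ = hA.eigenvalues ∘ e)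
    (hθa : Antitone θ) (hθ : ∃ e : Equiv.Perm (Fin n), θ = hL.eigenvalues ∘ e)
    (hδa : Antitone δ) (hδ : ∃ e : Equiv.Perm (Fin n), δ = hQ.eigenvalues ∘ e)
    (m : ℕ) (hmn : m ≤ n) :
    (∑ i ∈ Finset.univ.filter (fun i : Fin n => (i : ℕ) < m), μ i) ≤
      ((χ : ℝ) - 1) *
        (∑ i ∈ Finset.univ.filter (fun i : Fin n => (i : ℕ) < m), (μ i - δ i + θ i)) := by
  have hχ2 : 2 ≤ χ := by
    have := SimpleGraph.two_le_chromaticNumber_iff_ne_bot.2 (SimpleGraph.ne_bot_iff_exists_adj.2 he)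
    rw [hχ] at this
    exact_mod_cast this
  obtain ⟨k, rfl⟩ : ∃ k, χ = k + 1 := ⟨χ - 1, by omega⟩
  obtain ⟨c⟩ : G.Colorable (k + 1) := SimpleGraph.chromaticNumber_le_iff_colorable.1 hχ.le
  have kfA := hA.isGreatest_re_trace_map_mul (𝕜 := ℂ) hμa hμ hmn
  have kfL := hL.isGreatest_re_trace_map_mul (𝕜 := ℂ) hθa hθ hmn
  have kfQ := hQ.isGreatest_re_trace_map_mul (𝕜 := ℂ) hδa hδ hmn
  rw [SimpleGraph.map_adjMatrix_s10] at kfA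
  rw [SimpleGraph.map_lapMatrix] at kfL
  rw [Matrix.map_add _ (map_add _), SimpleGraph.map_degMatrix, SimpleGraph.map_adjMatrix_s10] at kfQ
  obtain ⟨P, hP, hPδ⟩ := kfQ.1
  have hAP := kfA.2 ⟨P, hP, rfl⟩
  beta_reduce at hPδ hAP
  have hRP := c.re_trace_smul_degMatrix_sub_lapMatrix_mul_le hP fun Y hY => kfL.2 ⟨Y, hY, rfl⟩
  have htrace := G.natCast_mul_re_trace_degMatrix_add_adjMatrix_mul k P
  have hk : (0 : ℝ) ≤ k - 1 := by
    rw [sub_nonneg]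
    exact_mod_cast (by omega : 1 ≤ k)
  have hAP' := mul_le_mul_of_nonneg_left hAP hk
  rw [hPδ] at htrace
  rw [sum_add_distrib, sum_sub_distrib]
  push_cast
  linarith

/-- **First generalized Kolotilina bound.** For a finite simple graph `G` on `n` vertices with
at least one edge and chromatic number `χ`, for every `1 ≤ m ≤ n`:
`Σ_{i=1}^m μ_i ≤ (χ - 1)·Σ_{i=1}^m (μ_i - δ_i + θ_i)`.
Here `μ`, `θ`, `δ` are the non-increasing enumerations of the eigenvalues of the adjacency
matrix, the Laplacian `L = D - A` and the signless Laplacian `Q = D + A`, respectively. -/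
theorem stmt_10 {n : ℕ} (hn : 0 < n) (G : SimpleGraph (Fin n)) [DecidableRel G.Adj]
    (he : ∃ v w : Fin n, G.Adj v w)
    (χ : ℕ) (hχ : G.chromaticNumber = (χ : ℕ∞))
    (hA : (G.adjMatrix ℝ).IsHermitian)
    (hL : (G.lapMatrix ℝ).IsHermitian)
    (hQ : (G.degMatrix ℝ + G.adjMatrix ℝ).IsHermitian)
    (μ θ δ : Fin n → ℝ)
    (hμa : Antitone μ) (hμ : ∃ e : Equiv.Perm (Fin n), μ = hA.eigenvalues ∘ e)
    (hθa : Antitone θ) (hθ : ∃ e : Equiv.Perm (Fin n), θ = hL.eigenvalues ∘ e)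
    (hδa : Antitone δ) (hδ : ∃ e : Equiv.Perm (Fin n), δ = hQ.eigenvalues ∘ e)
    (m : ℕ) (hm1 : 1 ≤ m) (hmn : m ≤ n) :
    (∑ i ∈ Finset.univ.filter (fun i : Fin n => (i : ℕ) < m), μ i) ≤
      ((χ : ℝ) - 1) *
        (∑ i ∈ Finset.univ.filter (fun i : Fin n => (i : ℕ) < m), (μ i - δ i + θ i)) :=
  stmt_10_general G he χ hχ hA hL hQ μ θ δ hμa hμ hθa hθ hδa hδ m hmn
end

section
/- (Bound of Lima, Oliveira, Abreu and Nikiforov.) Let G be a finite simple graph on n vertices with m ≥ 1 edges and chromatic number χ. Then 2m ≤ (χ − 1)·(2m − n·δ_n); in particular 2m − n·δ_n > 0 and χ ≥ 1 + 2m/(2m − n·δ_n). -/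
/-!
Fix a proper colouring `c` with `k = χ` colours and, for each colour `a`, the test vector
`y_a = 𝟙 - k·𝟙_{c⁻¹(a)}`. Then `∑_a y_a(v) y_a(u)` is `k² - k` if `c v = c u` and `-k`
otherwise, so `∑_a ‖y_a‖² = n(k² - k)`; and since `yᵀQy = ∑_{v ~ u} y(v)(y(v) + y(u))` only
involves differently coloured pairs, `∑_a y_aᵀ Q y_a = 2m(k² - 2k)`. Summing the Rayleigh
bound `δ_n ‖y_a‖² ≤ y_aᵀ Q y_a` over `a` gives `(k - 1) n δ_n ≤ 2m(k - 2)`, which rearranges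
to the claim.
-/

open Finset Matrix
open scoped MatrixOrder

theorem Matrix.IsHermitian.mul_dotProduct_self_le_dotProduct_mulVec {ι : Type*} [Fintype ι]
    [DecidableEq ι] {Q : Matrix ι ι ℝ} (hQ : Q.IsHermitian) {c : ℝ}
    (hc : ∀ i, c ≤ hQ.eigenvalues i) (x : ι → ℝ) :
    c * (x ⬝ᵥ x) ≤ x ⬝ᵥ (Q *ᵥ x) := by
  have hpsd : (Q - c • 1).PosSemidef := by
    rw [← nonneg_iff_posSemidef, sub_nonneg, ← Algebra.algebraMap_eq_smul_one,
      algebraMap_le_iff_le_spectrum hQ.isSelfAdjoint, hQ.spectrum_real_eq_range_eigenvalues]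
    rintro _ ⟨i, rfl⟩
    exact hc i
  simpa [sub_mulVec, smul_mulVec, dotProduct_smul] using hpsd.dotProduct_mulVec_nonneg x

namespace SimpleGraph

variable {V : Type*} {G : SimpleGraph V}

theorem dotProduct_mulVec_degMatrix_add_adjMatrix [Fintype V] [DecidableEq V]
    [DecidableRel G.Adj] {R : Type*} [CommSemiring R] (x : V → R) :
    x ⬝ᵥ ((G.degMatrix R + G.adjMatrix R) *ᵥ x) =
      ∑ v, ∑ u ∈ G.neighborFinset v, x v * (x v + x u) := by
  rw [add_mulVec, dotProduct_add, dotProduct_mulVec_degMatrix]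
  simp only [dotProduct, adjMatrix_mulVec_apply, ← sum_add_distrib]
  refine sum_congr rfl fun v _ => ?_
  simp only [mul_add, sum_add_distrib, sum_const, card_neighborFinset_eq_degree, nsmul_eq_mul,
    mul_sum]
  ring

variable {α : Type*} [Fintype α] [DecidableEq α]

def Coloring.testVector (c : G.Coloring α) (a : α) (v : V) : ℝ :=
  1 - if c v = a then (Fintype.card α : ℝ) else 0

theorem Coloring.sum_testVector_mul (c : G.Coloring α) (v u : V) :
    ∑ a, c.testVector a v * c.testVector a u =
      (if c v = c u then (Fintype.card α : ℝ) ^ 2 else 0) - Fintype.card α := by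
  simp only [Coloring.testVector, sub_mul, mul_sub, one_mul, mul_one, sum_sub_distrib, ite_mul,
    mul_ite, zero_mul, mul_zero, sum_ite_eq, mem_univ, if_true, sum_const, card_univ,
    nsmul_eq_mul, ← sq]
  ring

theorem Coloring.sum_testVector_dotProduct_self [Fintype V] (c : G.Coloring α) :
    ∑ a, c.testVector a ⬝ᵥ c.testVector a =
      Fintype.card V * ((Fintype.card α : ℝ) ^ 2 - Fintype.card α) := by
  simp only [dotProduct]
  rw [sum_comm]
  simp [c.sum_testVector_mul, mul_sub]

theorem Coloring.sum_testVector_dotProduct_mulVec [Fintype V] [DecidableEq V]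
    [DecidableRel G.Adj] (c : G.Coloring α) :
    ∑ a, c.testVector a ⬝ᵥ ((G.degMatrix ℝ + G.adjMatrix ℝ) *ᵥ c.testVector a) =
      2 * #G.edgeFinset * ((Fintype.card α : ℝ) ^ 2 - 2 * Fintype.card α) := by
  have hedge : ∀ v, ∀ u ∈ G.neighborFinset v,
      ∑ a, c.testVector a v * (c.testVector a v + c.testVector a u) =
        (Fintype.card α : ℝ) ^ 2 - 2 * Fintype.card α := by
    intro v u hu
    have hcol : c v ≠ c u := c.valid ((mem_neighborFinset G v u).mp hu)
    simp only [mul_add, sum_add_distrib, c.sum_testVector_mul, if_neg hcol, ↓reduceIte]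
    ring
  calc ∑ a, c.testVector a ⬝ᵥ ((G.degMatrix ℝ + G.adjMatrix ℝ) *ᵥ c.testVector a)
      = ∑ v, ∑ u ∈ G.neighborFinset v,
          ∑ a, c.testVector a v * (c.testVector a v + c.testVector a u) := by
        simp only [dotProduct_mulVec_degMatrix_add_adjMatrix]
        rw [sum_comm]
        exact sum_congr rfl fun v _ => sum_comm
    _ = ∑ v, (G.degree v : ℝ) * ((Fintype.card α : ℝ) ^ 2 - 2 * Fintype.card α) := by
        refine sum_congr rfl fun v _ => ?_
        rw [sum_congr rfl (hedge v), sum_const, card_neighborFinset_eq_degree, nsmul_eq_mul]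
    _ = _ := by
        rw [← sum_mul, ← Nat.cast_sum, sum_degrees_eq_twice_card_edges]
        push_cast
        ring

theorem Coloring.mul_le_of_forall_le_eigenvalues [Fintype V] [DecidableEq V]
    [DecidableRel G.Adj] [Nonempty α] (c : G.Coloring α)
    (hQ : (G.degMatrix ℝ + G.adjMatrix ℝ).IsHermitian) {r : ℝ} (hr : ∀ i, r ≤ hQ.eigenvalues i) :
    ((Fintype.card α : ℝ) - 1) * (Fintype.card V * r) ≤
      2 * #G.edgeFinset * ((Fintype.card α : ℝ) - 2) := by
  have hsum := sum_le_sum fun a (_ : a ∈ univ) =>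
    hQ.mul_dotProduct_self_le_dotProduct_mulVec hr (c.testVector a)
  rw [← mul_sum, c.sum_testVector_dotProduct_self, c.sum_testVector_dotProduct_mulVec] at hsum
  have hk : (0 : ℝ) < Fintype.card α := by exact_mod_cast Fintype.card_pos
  refine le_of_mul_le_mul_left ?_ hk
  linarith

end SimpleGraph

/-- **Bound of Lima, Oliveira, Abreu and Nikiforov.** For a finite simple graph `G` on `n`
vertices with `m ≥ 1` edges and chromatic number `χ`:
`2m ≤ (χ - 1)·(2m - n·δ_n)`; in particular `2m - n·δ_n > 0` and
`χ ≥ 1 + 2m/(2m - n·δ_n)`.  Here `δ` is the non-increasing enumeration of the eigenvalues of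
the signless Laplacian `Q = D + A`, and `m` is the number of edges. -/
theorem stmt_12 {n : ℕ} (hn : 0 < n) (G : SimpleGraph (Fin n)) [DecidableRel G.Adj]
    (m : ℕ) (hm : m = G.edgeFinset.card) (hm1 : 1 ≤ m)
    (χ : ℕ) (hχ : G.chromaticNumber = (χ : ℕ∞))
    (hQ : (G.degMatrix ℝ + G.adjMatrix ℝ).IsHermitian)
    (δ : Fin n → ℝ)
    (hδa : Antitone δ) (hδ : ∃ e : Equiv.Perm (Fin n), δ = hQ.eigenvalues ∘ e) :
    2 * (m : ℝ) ≤ ((χ : ℝ) - 1) * (2 * (m : ℝ) - (n : ℝ) * δ ⟨n - 1, by omega⟩) ∧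
    0 < 2 * (m : ℝ) - (n : ℝ) * δ ⟨n - 1, by omega⟩ ∧
    (χ : ℝ) ≥ 1 + 2 * (m : ℝ) / (2 * (m : ℝ) - (n : ℝ) * δ ⟨n - 1, by omega⟩) := by
  set last : Fin n := ⟨n - 1, by omega⟩
  have hmin : ∀ i, δ last ≤ hQ.eigenvalues i := fun i => by
    obtain ⟨e, rfl⟩ := hδ
    simpa using hδa (show e.symm i ≤ last from Fin.le_def.2 (by simp only [last]; omega))
  obtain ⟨c⟩ := SimpleGraph.chromaticNumber_le_iff_colorable.mp hχ.le
  have : Nonempty (Fin χ) := ⟨c ⟨0, hn⟩⟩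
  have key := c.mul_le_of_forall_le_eigenvalues hQ hmin
  simp only [Fintype.card_fin, ← hm] at key
  have hbound : 2 * (m : ℝ) ≤ (χ - 1) * (2 * m - n * δ last) := by linarith
  have hgap : 0 < 2 * (m : ℝ) - n * δ last := by
    have hm0 : (0 : ℝ) < m := by exact_mod_cast hm1
    have hχ1 : (1 : ℝ) ≤ χ := by exact_mod_cast (c ⟨0, hn⟩).pos
    exact pos_of_mul_pos_right (a := (χ : ℝ) - 1) (by linarith) (by linarith)
  refine ⟨hbound, hgap, ?_⟩
  linarith [(div_le_iff₀ hgap).mpr hbound]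
end
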